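/- arXiv:2505.20817 — 6 statements merged into one kernel-verified Lean document; each statement's English description precedes it below -/
import Mathlib

section
/- The function f(x) = exp(⟨a, x⟩) on R^d with a ≠ 0 is (0, ‖a‖)-smooth (i.e., satisfies ‖∇f(x) − ∇f(y)‖ ≤ ‖a‖·sup_{u∈[x,y]}‖∇f(u)‖·‖x−y‖ for all x, y) but is not L-smooth for any L ≥ 0. -/
open Real
open scoped RealInnerProductSpace

lemma grad_exp_aux {d : ℕ} (a : EuclideanSpace ℝ (Fin d)) (x : EuclideanSpace ℝ (Fin d)) :
    gradient (fun z => Real.exp ⟪a, z⟫) x = Real.exp ⟪a, x⟫ • a := by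
  refine HasGradientAt.gradient ?_
  rw [hasGradientAt_iff_hasFDerivAt]
  have h1 : HasFDerivAt (fun z : EuclideanSpace ℝ (Fin d) => ⟪a, z⟫) (innerSL ℝ a) x :=
    (innerSL ℝ a).hasFDerivAt
  have h2 := (Real.hasDerivAt_exp (⟪a, x⟫)).comp_hasFDerivAt x h1
  convert h2 using 1
  · rfl
  ext z
  simp [InnerProductSpace.toDual, real_inner_smul_left]
  ext z
  simp [InnerProductSpace.toDual_apply_apply, real_inner_smul_left]

lemma exp_sub_le (s t : ℝ) : |Real.exp s - Real.exp t| ≤ max (Real.exp s) (Real.exp t) * |s - t| := by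
  wlog h : t ≤ s generalizing s t
  · have := this t s (le_of_not_ge h)
    rw [abs_sub_comm, abs_sub_comm t s, max_comm] at this; exact this
  have key : Real.exp s - Real.exp t ≤ Real.exp s * (s - t) := by
    have h1 : 1 + (t - s) ≤ Real.exp (t - s) := by linarith [Real.add_one_le_exp (t - s)]
    have h2 : Real.exp s * (1 + (t - s)) ≤ Real.exp s * Real.exp (t - s) := by
      exact mul_le_mul_of_nonneg_left h1 (Real.exp_pos s).le
    rw [← Real.exp_add] at h2
    simp only [add_sub_cancel] at h2
    nlinarith
  rw [abs_of_nonneg (by nlinarith [Real.exp_le_exp.2 h] : (0:ℝ) ≤ Real.exp s - Real.exp t),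
    abs_of_nonneg (by linarith : (0:ℝ) ≤ s - t)]
  calc Real.exp s - Real.exp t ≤ Real.exp s * (s - t) := key
    _ ≤ max (Real.exp s) (Real.exp t) * (s - t) := by
        exact mul_le_mul_of_nonneg_right (le_max_left _ _) (by linarith)

theorem exp_inner_is_zero_norm_a_smooth_not_L_smooth {d : ℕ}
    (a : EuclideanSpace ℝ (Fin d)) (ha : a ≠ 0) :
    (∀ x y, ‖gradient (fun z => Real.exp ⟪a, z⟫) x
        - gradient (fun z => Real.exp ⟪a, z⟫) y‖ ≤
      ‖a‖ * sSup ((fun u => ‖gradient (fun z => Real.exp ⟪a, z⟫) u‖) '' segment ℝ x y)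
        * ‖x - y‖) ∧
    ¬ ∃ L : ℝ, 0 ≤ L ∧ ∀ x y, ‖gradient (fun z => Real.exp ⟪a, z⟫) x
        - gradient (fun z => Real.exp ⟪a, z⟫) y‖ ≤ L * ‖x - y‖ := by
  have hna : (0:ℝ) < ‖a‖ := norm_pos_iff.2 ha
  constructor
  · intro x y
    set s := ⟪a, x⟫ with hs
    set t := ⟪a, y⟫ with ht
    set M := max (Real.exp s) (Real.exp t) with hM
    -- rewrite gradients
    rw [grad_exp_aux, grad_exp_aux, ← sub_smul, norm_smul, Real.norm_eq_abs]
    -- the sSup is bounded below by M * ‖a‖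
    have hbdd : BddAbove ((fun u => ‖gradient (fun z => Real.exp ⟪a, z⟫) u‖) '' segment ℝ x y) := by
      refine ⟨M * ‖a‖, ?_⟩
      rintro r ⟨u, hu, rfl⟩
      dsimp only
      rw [grad_exp_aux, norm_smul, Real.norm_eq_abs, abs_of_pos (Real.exp_pos _)]
      refine mul_le_mul_of_nonneg_right ?_ (norm_nonneg a)
      obtain ⟨p, q, hp, hq, hpq, rfl⟩ := hu
      have : ⟪a, p • x + q • y⟫ = p * s + q * t := by
        rw [inner_add_right, real_inner_smul_right, real_inner_smul_right]
      rw [this]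
      have hle : p * s + q * t ≤ max s t := by
        calc p * s + q * t ≤ p * max s t + q * max s t := by
              gcongr <;> [exact le_max_left _ _; exact le_max_right _ _]
          _ = max s t := by rw [← add_mul, hpq, one_mul]
      calc Real.exp (p * s + q * t) ≤ Real.exp (max s t) := Real.exp_le_exp.2 hle
        _ ≤ M := by
            rcases max_cases s t with ⟨h1, _⟩ | ⟨h1, _⟩ <;> rw [h1]
            · exact le_max_left _ _
            · exact le_max_right _ _
    have hxS : Real.exp s * ‖a‖ ≤ sSup ((fun u => ‖gradient (fun z => Real.exp ⟪a, z⟫) u‖) '' segment ℝ x y) := by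
      have hmem : x ∈ segment ℝ x y := left_mem_segment ℝ x y
      have := le_csSup hbdd ⟨x, hmem, rfl⟩
      dsimp only at this
      rwa [grad_exp_aux, norm_smul, Real.norm_eq_abs, abs_of_pos (Real.exp_pos _)] at this
    have hyS : Real.exp t * ‖a‖ ≤ sSup ((fun u => ‖gradient (fun z => Real.exp ⟪a, z⟫) u‖) '' segment ℝ x y) := by
      have hmem : y ∈ segment ℝ x y := right_mem_segment ℝ x y
      have := le_csSup hbdd ⟨y, hmem, rfl⟩
      dsimp only at this
      rwa [grad_exp_aux, norm_smul, Real.norm_eq_abs, abs_of_pos (Real.exp_pos _)] at this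
    have hMS : M * ‖a‖ ≤ sSup ((fun u => ‖gradient (fun z => Real.exp ⟪a, z⟫) u‖) '' segment ℝ x y) := by
      rcases max_cases (Real.exp s) (Real.exp t) with ⟨h1, _⟩ | ⟨h1, _⟩ <;> rw [hM, h1]
      exacts [hxS, hyS]
    have hst : |s - t| ≤ ‖a‖ * ‖x - y‖ := by
      have : s - t = ⟪a, x - y⟫ := by rw [inner_sub_right]
      rw [this]
      exact abs_real_inner_le_norm a (x - y)
    calc |Real.exp s - Real.exp t| * ‖a‖ ≤ (M * |s - t|) * ‖a‖ := by
          exact mul_le_mul_of_nonneg_right (exp_sub_le s t) (norm_nonneg a)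
      _ ≤ (M * (‖a‖ * ‖x - y‖)) * ‖a‖ := by
          refine mul_le_mul_of_nonneg_right ?_ (norm_nonneg a)
          exact mul_le_mul_of_nonneg_left hst (le_max_of_le_left (Real.exp_pos s).le)
      _ = ‖a‖ * (M * ‖a‖) * ‖x - y‖ := by ring
      _ ≤ ‖a‖ * sSup ((fun u => ‖gradient (fun z => Real.exp ⟪a, z⟫) u‖) '' segment ℝ x y) * ‖x - y‖ := by
          gcongr
  · rintro ⟨L, hL, hLs⟩
    set T := 4 * L / ‖a‖ ^ 2 + 1 with hT
    have hT0 : 0 < T := by positivity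
    set x := (T / ‖a‖ ^ 2) • a with hx
    have hax : ⟪a, x⟫ = T := by
      rw [hx, real_inner_smul_right, real_inner_self_eq_norm_sq]
      field_simp
    have h0 : ⟪a, (0 : EuclideanSpace ℝ (Fin d))⟫ = 0 := inner_zero_right a
    have := hLs x 0
    rw [grad_exp_aux, grad_exp_aux, hax, h0, Real.exp_zero, ← sub_smul, norm_smul,
      Real.norm_eq_abs, sub_zero] at this
    have hnx : ‖x‖ = T / ‖a‖ := by
      rw [hx, norm_smul, Real.norm_eq_abs, abs_of_pos (by positivity)]
      field_simp
    rw [hnx] at this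
    clear_value x
    clear hx hax h0 hnx
    clear_value T
    -- so (exp T - 1) * ‖a‖ ≤ L * (T / ‖a‖), i.e. (exp T - 1) * ‖a‖^2 ≤ L * T
    have h1 : (Real.exp T - 1) * ‖a‖ ^ 2 ≤ L * T := by
      rw [abs_of_pos (by nlinarith [Real.exp_pos T, Real.add_one_le_exp T] : (0:ℝ) < Real.exp T - 1)] at this
      have := mul_le_mul_of_nonneg_right this hna.le
      calc (Real.exp T - 1) * ‖a‖ ^ 2 = (Real.exp T - 1) * ‖a‖ * ‖a‖ := by ring
        _ ≤ L * (T / ‖a‖) * ‖a‖ := this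
        _ = L * T := by field_simp
    -- but exp T - 1 ≥ T + T^2/4 > L*T/‖a‖^2
    have h2 : 1 + T / 2 ≤ Real.exp (T / 2) := by linarith [Real.add_one_le_exp (T / 2)]
    have h3 : (1 + T / 2) ^ 2 ≤ Real.exp T := by
      calc (1 + T / 2) ^ 2 ≤ Real.exp (T / 2) ^ 2 :=
            pow_le_pow_left₀ (by linarith) h2 2
        _ = Real.exp T := by
            rw [← Real.exp_nat_mul]; congr 1; push_cast; ring
    have hTgt : T ^ 2 / 4 * ‖a‖ ^ 2 > L * T := by
      have : T > 4 * L / ‖a‖ ^ 2 := by rw [hT]; linarith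
      have h4 : T * ‖a‖ ^ 2 > 4 * L := by
        have := mul_lt_mul_of_pos_right this (by positivity : (0:ℝ) < ‖a‖ ^ 2)
        rwa [div_mul_cancel₀] at this
        positivity
      have h5 := mul_pos hT0 (sub_pos.2 h4)
      nlinarith
    have h5 : T ^ 2 / 4 ≤ Real.exp T - 1 := by nlinarith
    have h6 := mul_le_mul_of_nonneg_right h5 (sq_nonneg ‖a‖)
    linarith
end

section
/- Suppose f: R^d → R is differentiable, attains its minimum f* at some point, and is (L0, L1)-smooth. Then for all x, ν‖∇f(x)‖² ≤ 2(L0 + L1‖∇f(x)‖)(f(x) − f*), where ν is the unique solution of ν·exp(ν) = 1. -/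
open Real
open scoped RealInnerProductSpace
set_option maxHeartbeats 2000000

open Set in
private lemma seg_mem_aux {d : ℕ} (x v : EuclideanSpace ℝ (Fin d)) {s t : ℝ}
    (hs : 0 ≤ s) (hst : s ≤ t) : x + s • v ∈ segment ℝ x (x + t • v) := by
  by_cases ht : t = 0
  · have hs0 : s = 0 := le_antisymm (ht ▸ hst) hs
    simp [hs0, left_mem_segment]
  · have ht' : 0 < t := lt_of_le_of_ne (hs.trans hst) (Ne.symm ht)
    rw [segment_eq_image']
    refine ⟨s / t, ⟨div_nonneg hs ht'.le, div_le_one_of_le₀ hst ht'.le⟩, ?_⟩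
    simp only [add_sub_cancel_left, smul_smul]
    rw [div_mul_cancel₀ _ ht]

open Set in
private lemma seg_param_aux {d : ℕ} (x v : EuclideanSpace ℝ (Fin d)) {t : ℝ} (ht : 0 ≤ t)
    {u : EuclideanSpace ℝ (Fin d)} (hu : u ∈ segment ℝ x (x + t • v)) :
    ∃ s, 0 ≤ s ∧ s ≤ t ∧ u = x + s • v := by
  rw [segment_eq_image'] at hu
  obtain ⟨θ, ⟨h0, h1⟩, rfl⟩ := hu
  refine ⟨θ * t, mul_nonneg h0 ht, by nlinarith, ?_⟩
  simp only [add_sub_cancel_left, smul_smul]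

private lemma seg_sub_aux {d : ℕ} (x v : EuclideanSpace ℝ (Fin d)) {a b t : ℝ}
    (ha : 0 ≤ a) (hab : a ≤ b) (hbt : b ≤ t) :
    segment ℝ (x + a • v) (x + b • v) ⊆ segment ℝ x (x + t • v) :=
  (convex_segment _ _).segment_subset (seg_mem_aux x v ha (hab.trans hbt))
    (seg_mem_aux x v (ha.trans hab) hbt)

private lemma seg_norm_aux {d : ℕ} (x v : EuclideanSpace ℝ (Fin d)) (hv : ‖v‖ = 1) (s r : ℝ) :
    ‖(x + s • v) - (x + r • v)‖ = |s - r| := by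
  have : (x + s • v) - (x + r • v) = (s - r) • v := by
    rw [sub_smul]; abel
  rw [this, norm_smul, hv, Real.norm_eq_abs, mul_one]

/-- Key descent estimate along a unit direction, proved via a Grönwall argument. -/
private lemma descent_aux {d : ℕ} (f : EuclideanSpace ℝ (Fin d) → ℝ)
    (hf : Differentiable ℝ f) (L0 L1 : ℝ) (hL0 : 0 ≤ L0) (hL1 : 0 ≤ L1)
    (hsmooth : ∀ x y, ‖gradient f x - gradient f y‖ ≤
      (L0 + L1 * sSup ((fun u => ‖gradient f u‖) '' segment ℝ x y)) * ‖x - y‖)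
    (x v : EuclideanSpace ℝ (Fin d)) (hv : ‖v‖ = 1) (T : ℝ) (hT0 : 0 < T) (hT1 : L1 * T < 1) :
    f (x + T • v) ≤ f x + ⟪gradient f x, v⟫ * T
      + (L0 + L1 * ‖gradient f x‖) * Real.exp (L1 * T) * T ^ 2 / 2 := by
  classical
  open Set in
  set g : EuclideanSpace ℝ (Fin d) := gradient f x with hg
  set G : ℝ := ‖g‖ with hG
  set γ : ℝ → EuclideanSpace ℝ (Fin d) := fun t => x + t • v with hγ
  set A : ℝ → Set ℝ := fun t => (fun u => ‖gradient f u‖) '' segment ℝ x (γ t) with hA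
  set S : ℝ → ℝ := fun t => sSup (A t) with hS
  set K : ℝ := (G + L0 * T) / (1 - L1 * T) with hK
  have h1T : 0 < 1 - L1 * T := by linarith
  have hGnn : 0 ≤ G := norm_nonneg _
  have hAne : ∀ t, (A t).Nonempty := fun t => ⟨‖gradient f x‖, x, left_mem_segment ℝ _ _, rfl⟩
  have hGA : ∀ t, G ∈ A t := fun t => ⟨x, left_mem_segment ℝ _ _, rfl⟩
  have hnorm : ∀ s r : ℝ, ‖γ s - γ r‖ = |s - r| := fun s r => seg_norm_aux x v hv s r
  have hnorm0 : ∀ s : ℝ, 0 ≤ s → ‖x - γ s‖ = s := by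
    intro s hs
    have h1 : x - γ s = (-s) • v := by
      simp only [hγ, neg_smul]; abel
    rw [h1, norm_smul, Real.norm_eq_abs, hv, mul_one, abs_of_nonpos (neg_nonpos.mpr hs), neg_neg]
  have hmonoA : ∀ {s t : ℝ}, 0 ≤ s → s ≤ t → A s ⊆ A t := by
    intro s t hs hst
    exact Set.image_mono
      ((convex_segment _ _).segment_subset (left_mem_segment ℝ _ _) (seg_mem_aux x v hs hst))
  -- pointwise bound for elements of A t, assuming only that relevant sup is compared
  have hApt : ∀ t, 0 ≤ t → t ≤ T → BddAbove (A t) → ∀ a ∈ A t,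
      a ≤ G + (L0 + L1 * S t) * t := by
    intro t ht0 htT hbdd a ha
    obtain ⟨u, hu, rfl⟩ := ha
    obtain ⟨s, hs0, hst, rfl⟩ := seg_param_aux x v ht0 hu
    have hsub : A s ⊆ A t := hmonoA hs0 hst
    have hbdds : BddAbove (A s) := hbdd.mono hsub
    have hSle : S s ≤ S t := csSup_le_csSup hbdd (hAne s) hsub
    have hSs0 : 0 ≤ S s := le_trans hGnn (le_csSup hbdds (hGA s))
    have hsm := hsmooth x (γ s)
    have h1 : ‖gradient f (γ s)‖ - G ≤ ‖g - gradient f (γ s)‖ := by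
      rw [norm_sub_rev]
      exact norm_sub_norm_le _ _
    have h2 : ‖g - gradient f (γ s)‖ ≤ (L0 + L1 * S s) * s := by
      calc ‖g - gradient f (γ s)‖ ≤
          (L0 + L1 * sSup ((fun u => ‖gradient f u‖) '' segment ℝ x (γ s))) * ‖x - γ s‖ :=
            hsm
        _ = (L0 + L1 * S s) * s := by rw [hnorm0 s hs0]
    have hfac : (L0 + L1 * S s) * s ≤ (L0 + L1 * S t) * t := by
      have : 0 ≤ L0 + L1 * S s := by positivity
      nlinarith [mul_le_mul_of_nonneg_left hSle hL1]
    linarith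
  -- every A t (t ∈ [0,T]) is bounded above
  have hbdd : ∀ t, 0 ≤ t → t ≤ T → BddAbove (A t) := by
    intro t ht0 htT
    refine ⟨max K (G + L0 * T), ?_⟩
    rintro a ⟨u, hu, rfl⟩
    obtain ⟨s, hs0, hst, rfl⟩ := seg_param_aux x v ht0 hu
    have hsT : s ≤ T := hst.trans htT
    by_cases hsB : BddAbove (A s)
    · -- fixed point argument: S s ≤ K
      have hpt := hApt s hs0 hsT hsB
      have hSs : S s ≤ G + (L0 + L1 * S s) * s := csSup_le (hAne s) hpt
      have hSs0 : 0 ≤ S s := le_trans hGnn (le_csSup hsB (hGA s))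
      have hSsK : S s ≤ K := by
        rw [hK, le_div_iff₀ h1T]
        nlinarith [mul_le_mul_of_nonneg_left hsT (show (0:ℝ) ≤ L0 + L1 * S s by positivity)]
      have : ‖gradient f (γ s)‖ ≤ S s := le_csSup hsB ⟨γ s, right_mem_segment ℝ _ _, rfl⟩
      exact le_max_of_le_left (this.trans hSsK)
    · -- unbounded: sSup = 0 junk value gives a direct bound
      have hzero : S s = 0 := Real.sSup_of_not_bddAbove hsB
      have h1 : ‖gradient f (γ s)‖ - G ≤ ‖g - gradient f (γ s)‖ := by
        rw [norm_sub_rev]; exact norm_sub_norm_le _ _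
      have h2 : ‖g - gradient f (γ s)‖ ≤ (L0 + L1 * S s) * s := by
        calc ‖g - gradient f (γ s)‖ ≤
            (L0 + L1 * sSup ((fun u => ‖gradient f u‖) '' segment ℝ x (γ s))) * ‖x - γ s‖ :=
              hsmooth x (γ s)
          _ = (L0 + L1 * S s) * s := by rw [hnorm0 s hs0]
      have : ‖gradient f (γ s)‖ ≤ G + L0 * s := by
        rw [hzero] at h2; nlinarith
      exact le_max_of_le_right (by nlinarith)
  have hSnn : ∀ t, 0 ≤ t → t ≤ T → 0 ≤ S t := by
    intro t ht0 htT
    exact le_trans hGnn (le_csSup (hbdd t ht0 htT) (hGA t))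
  have hSK : ∀ t, 0 ≤ t → t ≤ T → S t ≤ K := by
    intro t ht0 htT
    have hpt := hApt t ht0 htT (hbdd t ht0 htT)
    have hSt := csSup_le (hAne t) hpt
    have h0 := hSnn t ht0 htT
    rw [hK, le_div_iff₀ h1T]
    nlinarith [mul_le_mul_of_nonneg_left htT (show (0:ℝ) ≤ L0 + L1 * S t by positivity)]
  have hKnn : 0 ≤ K := le_trans (hSnn 0 le_rfl hT0.le) (hSK 0 le_rfl hT0.le)
  -- differential inequality for S
  have hD : ∀ s z, 0 ≤ s → s ≤ z → z ≤ T → S z ≤ S s + (L0 + L1 * S z) * (z - s) := by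
    intro s z hs0 hsz hzT
    have hz0 : 0 ≤ z := hs0.trans hsz
    have hbz := hbdd z hz0 hzT
    have hbs := hbdd s hs0 (hsz.trans hzT)
    have hSz0 : 0 ≤ S z := hSnn z hz0 hzT
    have hSs0 : 0 ≤ S s := hSnn s hs0 (hsz.trans hzT)
    refine csSup_le (hAne z) ?_
    rintro a ⟨u, hu, rfl⟩
    obtain ⟨r, hr0, hrz, rfl⟩ := seg_param_aux x v hz0 hu
    show ‖gradient f (γ r)‖ ≤ S s + (L0 + L1 * S z) * (z - s)
    by_cases hrs : r ≤ s
    · have : ‖gradient f (γ r)‖ ≤ S s :=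
        le_csSup hbs ⟨γ r, seg_mem_aux x v hr0 hrs, rfl⟩
      nlinarith [mul_nonneg (show (0:ℝ) ≤ L0 + L1 * S z by positivity)
        (show (0:ℝ) ≤ z - s by linarith)]
    · push_neg at hrs
      have hsm := hsmooth (γ s) (γ r)
      have hseg : segment ℝ (γ s) (γ r) ⊆ segment ℝ x (γ z) :=
        seg_sub_aux x v hs0 hrs.le hrz
      have hsubim : (fun u => ‖gradient f u‖) '' segment ℝ (γ s) (γ r) ⊆ A z :=
        Set.image_mono hseg
      have hne : ((fun u => ‖gradient f u‖) '' segment ℝ (γ s) (γ r)).Nonempty :=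
        ⟨‖gradient f (γ s)‖, γ s, left_mem_segment ℝ _ _, rfl⟩
      have hsup : sSup ((fun u => ‖gradient f u‖) '' segment ℝ (γ s) (γ r)) ≤ S z :=
        csSup_le_csSup hbz hne hsubim
      have h1 : ‖gradient f (γ r)‖ - ‖gradient f (γ s)‖ ≤ ‖gradient f (γ s) - gradient f (γ r)‖ :=
        by rw [norm_sub_rev]; exact norm_sub_norm_le _ _
      have h2 : ‖gradient f (γ s) - gradient f (γ r)‖ ≤ (L0 + L1 * S z) * (r - s) := by
        calc ‖gradient f (γ s) - gradient f (γ r)‖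
            ≤ (L0 + L1 * sSup ((fun u => ‖gradient f u‖) '' segment ℝ (γ s) (γ r))) *
              ‖γ s - γ r‖ := hsm
          _ ≤ (L0 + L1 * S z) * (r - s) := by
              rw [hnorm s r, abs_of_nonpos (by linarith)]
              have hc : 0 ≤ r - s := by linarith
              have : L0 + L1 * sSup ((fun u => ‖gradient f u‖) '' segment ℝ (γ s) (γ r))
                  ≤ L0 + L1 * S z := by nlinarith [mul_le_mul_of_nonneg_left hsup hL1]
              nlinarith [Real.sSup_nonneg' (⟨‖gradient f (γ s)‖,
                ⟨γ s, left_mem_segment ℝ _ _, rfl⟩, norm_nonneg _⟩ :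
                  ∃ a ∈ (fun u => ‖gradient f u‖) '' segment ℝ (γ s) (γ r), 0 ≤ a)]
      have h3 : ‖gradient f (γ s)‖ ≤ S s :=
        le_csSup hbs ⟨γ s, right_mem_segment ℝ _ _, rfl⟩
      have h4 : 0 ≤ L0 + L1 * S z := by positivity
      nlinarith
  -- S is monotone on [0,T]
  have hSmono : ∀ s z, 0 ≤ s → s ≤ z → z ≤ T → S s ≤ S z := by
    intro s z hs0 hsz hzT
    exact csSup_le_csSup (hbdd z (hs0.trans hsz) hzT) (hAne s) (hmonoA hs0 hsz)
  set C : ℝ := L0 + L1 * K with hC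
  have hCnn : 0 ≤ C := by positivity
  -- S is Lipschitz on [0,T], hence continuous
  have hlip : ∀ s z, 0 ≤ s → s ≤ z → z ≤ T → S z ≤ S s + C * (z - s) := by
    intro s z hs0 hsz hzT
    have h := hD s z hs0 hsz hzT
    have hSzK : S z ≤ S s + (L0 + L1 * S z) * (z - s) := h
    have hK' : S z ≤ K := hSK z (hs0.trans hsz) hzT
    have : (L0 + L1 * S z) ≤ C := by
      rw [hC]; nlinarith [mul_le_mul_of_nonneg_left hK' hL1]
    nlinarith
  have hcont : ContinuousOn S (Icc 0 T) := by
    have : LipschitzOnWith (Real.toNNReal C) S (Icc 0 T) := by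
      apply LipschitzOnWith.of_le_add_mul'
      intro a ha b hb
      rcases le_total a b with hab | hba
      · have := hSmono a b ha.1 hab hb.2
        have hd : dist a b ≥ 0 := dist_nonneg
        nlinarith
      · have := hlip b a hb.1 hba ha.2
        have hd : dist a b = a - b := by
          rw [Real.dist_eq, abs_of_nonneg (by linarith)]
        nlinarith
    exact this.continuousOn
  have hS0 : S 0 = G := by
    have h0 : A 0 = {G} := by
      simp only [hA, hγ, zero_smul, add_zero, segment_same, Set.image_singleton, hG, hg]
    show sSup (A 0) = G
    rw [h0, csSup_singleton]
  -- Grönwall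
  have hgron : ∀ t ∈ Icc 0 T, S t ≤ gronwallBound G L1 L0 t := by
    have := le_gronwallBound_of_liminf_deriv_right_le (f := S)
      (f' := fun t => L0 + L1 * S t) (δ := G) (K := L1) (ε := L0) (a := 0) (b := T)
      hcont ?_ (le_of_eq hS0) ?_
    · intro t ht
      simpa using this t ht
    · -- liminf condition
      intro t ht r hr
      have hr' : L0 + L1 * S t < r := hr
      apply Filter.Eventually.frequently
      have htT : t < T := ht.2
      have ht0 : 0 ≤ t := ht.1
      set δ₀ : ℝ := (r - (L0 + L1 * S t)) / (L1 * C + 1) with hδ₀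
      have hrpos : 0 < r - (L0 + L1 * S t) := by linarith
      have hden : 0 < L1 * C + 1 := by positivity
      have hδpos : 0 < δ₀ := div_pos hrpos hden
      have hmem : Ioo t (min T (t + δ₀)) ∈ nhdsWithin t (Ioi t) :=
        Ioo_mem_nhdsGT_of_mem ⟨le_rfl, lt_min htT (by linarith)⟩
      filter_upwards [hmem] with z hz
      have hzt : t < z := hz.1
      have hzT : z ≤ T := le_of_lt (lt_of_lt_of_le hz.2 (min_le_left _ _))
      have hzδ : z - t < δ₀ := by
        have := lt_of_lt_of_le hz.2 (min_le_right _ _); linarith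
      have hd := hD t z ht0 hzt.le hzT
      have hlz := hlip t z ht0 hzt.le hzT
      have hq : L0 + L1 * S z ≤ L0 + L1 * S t + L1 * C * (z - t) := by
        nlinarith [mul_le_mul_of_nonneg_left hlz hL1]
      have hqr : L0 + L1 * S z < r := by
        have h5 : L1 * C * (z - t) ≤ L1 * C * δ₀ :=
          mul_le_mul_of_nonneg_left hzδ.le (by positivity)
        have h6 : (L1 * C + 1) * δ₀ = r - (L0 + L1 * S t) := by
          rw [hδ₀]; field_simp
        nlinarith
      have hpos : 0 < z - t := by linarith
      rw [inv_mul_lt_iff₀ hpos]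
      nlinarith
    · intro t ht
      show L0 + L1 * S t ≤ L1 * S t + L0
      linarith
  -- convert Grönwall bound: L0 + L1 * S t ≤ (L0 + L1*G) * exp (L1 * t)
  have hexp : ∀ t ∈ Icc 0 T, L0 + L1 * S t ≤ (L0 + L1 * G) * Real.exp (L1 * t) := by
    intro t ht
    have hgb := hgron t ht
    by_cases hL1' : L1 = 0
    · simp only [hL1', zero_mul, add_zero, mul_zero, Real.exp_zero, mul_one]
      linarith
    · rw [gronwallBound_of_K_ne_0 hL1'] at hgb
      have : L1 * S t ≤ L1 * (G * Real.exp (L1 * t) + L0 / L1 * (Real.exp (L1 * t) - 1)) :=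
        mul_le_mul_of_nonneg_left hgb hL1
      have hfield : L1 * (G * Real.exp (L1 * t) + L0 / L1 * (Real.exp (L1 * t) - 1))
          = (L0 + L1 * G) * Real.exp (L1 * t) - L0 := by
        field_simp; ring
      linarith
  -- FTC along the segment
  set φ : ℝ → ℝ := fun t => f (x + t • v) with hφ
  have hderiv : ∀ t : ℝ, HasDerivAt φ (fderiv ℝ f (γ t) v) t := by
    intro t
    have hline : HasDerivAt (fun s : ℝ => x + s • v) v t := by
      simpa using ((hasDerivAt_id t).smul_const v).const_add x
    exact (hf (γ t)).hasFDerivAt.comp_hasDerivAt t hline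
  have hderiv' : deriv φ = fun t => fderiv ℝ f (γ t) v := funext fun t => (hderiv t).deriv
  have hinner : ∀ u, fderiv ℝ f u v = ⟪gradient f u, v⟫ := by
    intro u
    rw [gradient, InnerProductSpace.toDual_symm_apply]
  -- integrability
  have hbd : ∀ t ∈ Icc 0 T, ‖deriv φ t‖ ≤ K := by
    intro t ht
    rw [hderiv']
    have h1 : ‖fderiv ℝ f (γ t) v‖ ≤ ‖fderiv ℝ f (γ t)‖ * ‖v‖ :=
      (fderiv ℝ f (γ t)).le_opNorm v
    have h2 : ‖fderiv ℝ f (γ t)‖ = ‖gradient f (γ t)‖ := by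
      rw [gradient]
      exact (LinearIsometryEquiv.norm_map _ _).symm
    have h3 : ‖gradient f (γ t)‖ ≤ S t :=
      le_csSup (hbdd t ht.1 ht.2) ⟨γ t, right_mem_segment ℝ _ _, rfl⟩
    have h4 := hSK t ht.1 ht.2
    calc ‖fderiv ℝ f (γ t) v‖ ≤ ‖fderiv ℝ f (γ t)‖ * ‖v‖ := h1
      _ = ‖gradient f (γ t)‖ := by rw [h2, hv, mul_one]
      _ ≤ K := h3.trans h4
  have hint : IntervalIntegrable (deriv φ) MeasureTheory.volume 0 T := by
    rw [intervalIntegrable_iff_integrableOn_Icc_of_le hT0.le]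
    refine MeasureTheory.Integrable.mono' (g := fun _ => K)
      (MeasureTheory.integrableOn_const measure_Icc_lt_top.ne)
      ((measurable_deriv φ).aestronglyMeasurable.restrict) ?_
    exact (MeasureTheory.ae_restrict_iff' measurableSet_Icc).2
      (Filter.Eventually.of_forall fun t ht => hbd t ht)
  have hFTC : ∫ t in (0:ℝ)..T, deriv φ t = φ T - φ 0 := by
    apply intervalIntegral.integral_eq_sub_of_hasDerivAt
    · intro t _
      rw [hderiv']
      exact hderiv t
    · exact hint
  -- pointwise bound on the derivative
  set c : ℝ := (L0 + L1 * G) * Real.exp (L1 * T) with hc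
  have hcnn : 0 ≤ c := by positivity
  have hptb : ∀ t ∈ Icc 0 T, deriv φ t ≤ ⟪g, v⟫ + c * t := by
    intro t ht
    simp only [hderiv', hinner]
    have hsplit : ⟪gradient f (γ t), v⟫ = ⟪g, v⟫ + ⟪gradient f (γ t) - g, v⟫ := by
      rw [inner_sub_left]; ring
    rw [hsplit]
    have h1 : ⟪gradient f (γ t) - g, v⟫ ≤ ‖gradient f (γ t) - g‖ := by
      calc ⟪gradient f (γ t) - g, v⟫ ≤ ‖gradient f (γ t) - g‖ * ‖v‖ := real_inner_le_norm _ _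
        _ = ‖gradient f (γ t) - g‖ := by rw [hv, mul_one]
    have h2 : ‖gradient f (γ t) - g‖ ≤ (L0 + L1 * S t) * t := by
      calc ‖gradient f (γ t) - g‖ = ‖g - gradient f (γ t)‖ := norm_sub_rev _ _
        _ ≤ (L0 + L1 * sSup ((fun u => ‖gradient f u‖) '' segment ℝ x (γ t))) * ‖x - γ t‖ :=
            hsmooth x (γ t)
        _ = (L0 + L1 * S t) * t := by rw [hnorm0 t ht.1]
    have h3 : (L0 + L1 * S t) * t ≤ c * t := by
      have he := hexp t ht
      have hee : (L0 + L1 * G) * Real.exp (L1 * t) ≤ c := by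
        rw [hc]
        have h8 : Real.exp (L1 * t) ≤ Real.exp (L1 * T) :=
          Real.exp_le_exp.2 (mul_le_mul_of_nonneg_left ht.2 hL1)
        nlinarith [mul_le_mul_of_nonneg_left h8 (show (0:ℝ) ≤ L0 + L1 * G by positivity)]
      exact mul_le_mul_of_nonneg_right (he.trans hee) ht.1
    linarith
  -- integrate the bound
  have hub : IntervalIntegrable (fun t => ⟪g, v⟫ + c * t) MeasureTheory.volume 0 T :=
    (continuous_const.add (continuous_const.mul continuous_id')).intervalIntegrable 0 T
  have hmono := intervalIntegral.integral_mono_on hT0.le hint hub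
    (fun t ht => hptb t ht)
  have hcomp : ∫ t in (0:ℝ)..T, (⟪g, v⟫ + c * t) = ⟪g, v⟫ * T + c * T ^ 2 / 2 := by
    rw [intervalIntegral.integral_add (g := fun t => c * t) intervalIntegrable_const
      ((continuous_const.mul continuous_id').intervalIntegrable 0 T),
      intervalIntegral.integral_const, intervalIntegral.integral_const_mul, integral_id]
    simp; ring
  have hφT : φ T - φ 0 ≤ ⟪g, v⟫ * T + c * T ^ 2 / 2 := by
    rw [← hFTC, ← hcomp]; exact hmono
  have hφ0 : φ 0 = f x := by simp [hφ]
  have hφT' : φ T = f (x + T • v) := rfl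
  rw [hφ0, hφT'] at hφT
  rw [hg] at hφT
  linarith

theorem grad_sq_le_of_L0_L1_smooth {d : ℕ} (f : EuclideanSpace ℝ (Fin d) → ℝ)
    (hf : Differentiable ℝ f) (L0 L1 : ℝ) (hL0 : 0 ≤ L0) (hL1 : 0 ≤ L1)
    (hsmooth : ∀ x y, ‖gradient f x - gradient f y‖ ≤
      (L0 + L1 * sSup ((fun u => ‖gradient f u‖) '' segment ℝ x y)) * ‖x - y‖)
    (xstar : EuclideanSpace ℝ (Fin d)) (hmin : ∀ y, f xstar ≤ f y)
    (ν : ℝ) (hν : 0 < ν) (hνeq : ν * Real.exp ν = 1) :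
    ∀ x, ν * ‖gradient f x‖ ^ 2 ≤ 2 * (L0 + L1 * ‖gradient f x‖) * (f x - f xstar) := by
  intro x
  set g : EuclideanSpace ℝ (Fin d) := gradient f x with hg
  set G : ℝ := ‖g‖ with hG
  have hGnn : 0 ≤ G := norm_nonneg _
  have hfx : 0 ≤ f x - f xstar := by linarith [hmin x]
  -- basic facts about ν
  have hν1 : ν < 1 := by
    by_contra h
    push_neg at h
    have h1 : Real.exp 1 ≤ Real.exp ν := Real.exp_le_exp.2 h
    have h2 : (1:ℝ) * Real.exp 1 ≤ ν * Real.exp ν :=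
      mul_le_mul h h1 (le_of_lt (Real.exp_pos 1)) (by linarith)
    have h3 : (2:ℝ) < Real.exp 1 := by
      have := Real.add_one_lt_exp (x := 1) (by norm_num)
      linarith
    linarith [hνeq]
  rcases eq_or_lt_of_le hGnn with hG0 | hGpos
  · -- gradient vanishes
    rw [← hG0]
    have : (0:ℝ) ^ 2 = 0 := by norm_num
    rw [this, mul_zero]
    have : 0 ≤ L0 + L1 * 0 := by linarith
    positivity
  · -- gradient does not vanish
    set lam : ℝ := L0 + L1 * G with hlam
    have hlamnn : 0 ≤ lam := by positivity
    rcases eq_or_lt_of_le hlamnn with hlam0 | hlampos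
    · -- degenerate: L0 = 0 and L1 = 0, forces gradient constant, contradiction with minimum
      exfalso
      have hL00 : L0 = 0 := by nlinarith [mul_nonneg hL1 hGnn]
      have hL10 : L1 * G = 0 := by nlinarith
      have hL1' : L1 = 0 := by
        rcases mul_eq_zero.1 hL10 with h | h
        · exact h
        · exact absurd h (ne_of_gt hGpos)
      have hsm := hsmooth x xstar
      rw [hL00, hL1'] at hsm
      simp only [zero_mul, add_zero, zero_add] at hsm
      have hgeq : gradient f x = gradient f xstar := by
        have := norm_sub_eq_zero_iff.1 (le_antisymm (by simpa using hsm) (norm_nonneg _))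
        exact this
      have hlocal : IsLocalMin f xstar := Filter.Eventually.of_forall hmin
      have hfder : fderiv ℝ f xstar = 0 := hlocal.fderiv_eq_zero
      have : gradient f xstar = 0 := by
        rw [gradient, hfder, map_zero]
      rw [hg, hgeq, this] at hG
      rw [hG] at hGpos
      simp at hGpos
    · -- main case
      set v : EuclideanSpace ℝ (Fin d) := (-(G⁻¹)) • g with hv
      have hvnorm : ‖v‖ = 1 := by
        rw [hv, norm_smul, Real.norm_eq_abs, abs_neg, abs_inv, abs_of_pos hGpos, ← hG]
        field_simp
      set T : ℝ := ν * G / lam with hT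
      have hT0 : 0 < T := by positivity
      have hlamT : lam * T = ν * G := by
        rw [hT]; field_simp
      have hT1 : L1 * T < 1 := by
        have h1 : L1 * T * lam = ν * (L1 * G) := by
          rw [mul_assoc, mul_comm T lam, hlamT]; ring
        have h2 : L1 * G ≤ lam := by rw [hlam]; linarith
        have h3 : L1 * T * lam ≤ ν * lam := by
          rw [h1]
          exact mul_le_mul_of_nonneg_left h2 hν.le
        have h4 : L1 * T ≤ ν := le_of_mul_le_mul_right (by linarith) hlampos
        linarith
      have hdesc := descent_aux f hf L0 L1 hL0 hL1 hsmooth x v hvnorm T hT0 hT1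
      have hinner : ⟪gradient f x, v⟫ = -G := by
        rw [hv, ← hg, real_inner_smul_right, real_inner_self_eq_norm_sq, ← hG]
        field_simp
      rw [hinner] at hdesc
      have hmin' := hmin (x + T • v)
      -- exp bound
      have hexpT : Real.exp (L1 * T) ≤ Real.exp ν := by
        apply Real.exp_le_exp.2
        have h1 : L1 * T * lam = ν * (L1 * G) := by
          rw [mul_assoc, mul_comm T lam, hlamT]; ring
        have h2 : L1 * G ≤ lam := by rw [hlam]; linarith
        have h3 : L1 * T * lam ≤ ν * lam := by
          rw [h1]; exact mul_le_mul_of_nonneg_left h2 hν.le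
        exact le_of_mul_le_mul_right (by linarith) hlampos
      set E : ℝ := Real.exp (L1 * T) with hE
      set Eν : ℝ := Real.exp ν with hEν
      have hEpos : 0 < E := Real.exp_pos _
      have hchain : f xstar ≤ f x + (-G) * T + lam * E * T ^ 2 / 2 := by
        calc f xstar ≤ f (x + T • v) := hmin'
          _ ≤ f x + (-G) * T + lam * E * T ^ 2 / 2 := by
              have h9 : ‖gradient f x‖ = G := rfl
              rw [h9, ← hlam] at hdesc
              linarith
      -- final arithmetic
      have hTsq : lam * T ^ 2 = ν * G * T := by
        rw [pow_two, ← mul_assoc, hlamT]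
      have hGT : G * T = ν * G ^ 2 / lam := by
        rw [hT]; field_simp
      have hkey : lam * E * T ^ 2 / 2 ≤ ν * G ^ 2 / lam / 2 := by
        have h1 : lam * E * T ^ 2 = E * (ν * G * T) := by
          rw [mul_comm lam E, mul_assoc, hTsq]
        have h2 : E * (ν * G * T) ≤ Eν * (ν * G * T) := by
          apply mul_le_mul_of_nonneg_right hexpT
          positivity
        have h3 : Eν * (ν * G * T) = (ν * Eν) * (G * T) := by ring
        have h4 : (ν * Eν) * (G * T) = G * T := by rw [hEν] at *; rw [hνeq, one_mul]
        have h5 : G * T = ν * G ^ 2 / lam := hGT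
        nlinarith
      have hfinal : ν * G ^ 2 / lam / 2 ≤ f x - f xstar := by
        have hGT2 : (-G) * T = -(ν * G ^ 2 / lam) := by rw [neg_mul, hGT]
        rw [hGT2] at hchain
        linarith
      have : ν * G ^ 2 ≤ 2 * lam * (f x - f xstar) := by
        rw [div_div, div_le_iff₀ (by positivity)] at hfinal
        linarith
      linarith [this]
end

section
/- If f is (L0, L1)-smooth, then for all x, y ∈ R^d: ‖∇f(y) − ∇f(x)‖ ≤ (L0 + L1‖∇f(x)‖)·exp(L1‖y − x‖)·‖y − x‖. -/
open Real
open scoped RealInnerProductSpace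


lemma seg_norm_le {E : Type*} [NormedAddCommGroup E] [NormedSpace ℝ E] {u v w : E}
    (hw : w ∈ segment ℝ u v) : ‖u - w‖ ≤ ‖u - v‖ := by
  obtain ⟨a, b, ha, hb, hab, rfl⟩ := hw
  have ha' : a = 1 - b := by linarith
  subst ha'
  have h : u - ((1 - b) • u + b • v) = b • (u - v) := by module
  rw [h, norm_smul, Real.norm_eq_abs, abs_of_nonneg hb]
  nlinarith [norm_nonneg (u - v)]

lemma aux_sup_bound {d : ℕ} (f : EuclideanSpace ℝ (Fin d) → ℝ)
    (L0 L1 : ℝ) (hL0 : 0 ≤ L0) (hL1 : 0 ≤ L1)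
    (hsmooth : ∀ x y, ‖gradient f x - gradient f y‖ ≤
      (L0 + L1 * sSup ((fun u => ‖gradient f u‖) '' segment ℝ x y)) * ‖x - y‖)
    (u v : EuclideanSpace ℝ (Fin d)) :
    (1 - L1 * ‖u - v‖) * (L0 + L1 * sSup ((fun w => ‖gradient f w‖) '' segment ℝ u v))
      ≤ L0 + L1 * ‖gradient f u‖ := by
  set g : EuclideanSpace ℝ (Fin d) → ℝ := fun w => ‖gradient f w‖ with hg
  by_cases hbdd : BddAbove (g '' segment ℝ u v)
  · set S := sSup (g '' segment ℝ u v) with hS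
    have hmemu : g u ∈ g '' segment ℝ u v := ⟨u, left_mem_segment ℝ u v, rfl⟩
    have hSgu : g u ≤ S := le_csSup hbdd hmemu
    have hS0 : 0 ≤ S := le_trans (norm_nonneg _) hSgu
    have hkey : S ≤ g u + (L0 + L1 * S) * ‖u - v‖ := by
      apply csSup_le (Set.Nonempty.image _ ⟨u, left_mem_segment ℝ u v⟩)
      rintro _ ⟨w, hw, rfl⟩
      have h1 : g w ≤ g u + ‖gradient f u - gradient f w‖ := by
        have := norm_sub_norm_le (gradient f u) (gradient f w)
        simp only [hg]
        linarith [abs_le.mp (abs_norm_sub_norm_le (gradient f w) (gradient f u)),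
          norm_sub_rev (gradient f u) (gradient f w)]
      have h2 := hsmooth u w
      have hsub : segment ℝ u w ⊆ segment ℝ u v :=
        (convex_segment u v).segment_subset (left_mem_segment ℝ u v) hw
      have hsup : sSup (g '' segment ℝ u w) ≤ S :=
        csSup_le_csSup hbdd (Set.Nonempty.image _ ⟨u, left_mem_segment ℝ u w⟩)
          (Set.image_mono hsub)
      have hnw : ‖u - w‖ ≤ ‖u - v‖ := seg_norm_le hw
      have hnn : 0 ≤ L0 + L1 * sSup (g '' segment ℝ u w) := by
        have hmemu' : g u ∈ g '' segment ℝ u w := ⟨u, left_mem_segment ℝ u w, rfl⟩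
        have : g u ≤ sSup (g '' segment ℝ u w) :=
          le_csSup (hbdd.mono (Set.image_mono hsub)) hmemu'
        have : (0:ℝ) ≤ sSup (g '' segment ℝ u w) := le_trans (norm_nonneg _) this
        nlinarith
      have h3 : (L0 + L1 * sSup (g '' segment ℝ u w)) * ‖u - w‖ ≤ (L0 + L1 * S) * ‖u - v‖ := by
        apply mul_le_mul _ hnw (norm_nonneg _) _
        · nlinarith
        · nlinarith
      linarith
    nlinarith [mul_le_mul_of_nonneg_left hkey hL1, norm_nonneg (u - v), norm_nonneg (gradient f u)]
  · rw [Real.sSup_of_not_bddAbove hbdd]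
    have := mul_nonneg hL1 (norm_nonneg (u - v))
    nlinarith [norm_nonneg (gradient f u)]

set_option maxHeartbeats 1000000 in
theorem L0_L1_smooth_exp_form {d : ℕ} (f : EuclideanSpace ℝ (Fin d) → ℝ)
    (hf : Differentiable ℝ f) (L0 L1 : ℝ) (hL0 : 0 ≤ L0) (hL1 : 0 ≤ L1)
    (hsmooth : ∀ x y, ‖gradient f x - gradient f y‖ ≤
      (L0 + L1 * sSup ((fun u => ‖gradient f u‖) '' segment ℝ x y)) * ‖x - y‖) :
    ∀ x y, ‖gradient f y - gradient f x‖ ≤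
      (L0 + L1 * ‖gradient f x‖) * Real.exp (L1 * ‖y - x‖) * ‖y - x‖ := by
  intro x y
  set G : ℝ := ‖gradient f x‖ with hG
  set r : ℝ := ‖y - x‖ with hr
  set A : ℝ := L0 + L1 * G with hA
  have hr0 : 0 ≤ r := norm_nonneg _
  have hA0 : 0 ≤ A := by positivity
  -- key finite-n bound
  have key : ∀ n : ℕ, L1 * r < n → ‖gradient f y - gradient f x‖ ≤
      A * r * ((1 - L1 * (r / n))⁻¹) ^ n := by
    intro n hn
    have hn0 : 0 < (n : ℝ) := lt_of_le_of_lt (by positivity) hn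
    set c : ℝ := L1 * (r / n) with hcdef
    have hc0 : 0 ≤ c := by positivity
    have hc1 : c < 1 := by
      rw [hcdef, mul_div_assoc']
      exact (div_lt_one hn0).mpr hn
    set q : ℝ := (1 - c)⁻¹ with hqdef
    have h1c : 0 < 1 - c := by linarith
    have hqc : q * (1 - c) = 1 := inv_mul_cancel₀ (ne_of_gt h1c)
    have hq1 : 1 ≤ q := by
      rw [hqdef]
      rw [le_inv_comm₀] <;> linarith
    have hq0 : 0 < q := lt_of_lt_of_le one_pos hq1
    clear_value c q
    set z : ℕ → EuclideanSpace ℝ (Fin d) := fun k => x + ((k : ℝ) / n) • (y - x) with hz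
    have hzstep : ∀ k : ℕ, z k - z (k + 1) = (-(1 / (n:ℝ))) • (y - x) := by
      intro k
      simp only [hz]
      have : ((k:ℝ)+1)/n = (k:ℝ)/n + 1/n := by ring
      push_cast
      rw [this]
      module
    have hznorm : ∀ k : ℕ, ‖z k - z (k + 1)‖ = r / n := by
      intro k
      rw [hzstep k, norm_smul, Real.norm_eq_abs, abs_neg, abs_of_nonneg (by positivity : (0:ℝ) ≤ 1/(n:ℝ))]
      rw [← hr]; ring
    have hz0 : z 0 = x := by simp [hz]
    have hzn : z n = y := by
      simp only [hz]
      rw [div_self (ne_of_gt hn0), one_smul]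
      abel
    -- induction
    have ind : ∀ k : ℕ, (L0 + L1 * ‖gradient f (z k)‖ ≤ A * q ^ k) ∧
        (‖gradient f (z k) - gradient f x‖ ≤ A * (r / n) * k * q ^ k) := by
      intro k
      induction k with
      | zero =>
        refine ⟨?_, ?_⟩
        · simp [hz0, hA, hG]
        · simp [hz0]
      | succ k ih =>
        obtain ⟨ih1, ih2⟩ := ih
        set u := z k
        set v := z (k + 1)
        have hcuv : L1 * ‖u - v‖ = c := by rw [hznorm k, hcdef]
        have haux := aux_sup_bound f L0 L1 hL0 hL1 hsmooth u v
        rw [hcuv] at haux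
        set S : ℝ := sSup ((fun w => ‖gradient f w‖) '' segment ℝ u v) with hSdef
        -- L0 + L1*S ≤ (L0 + L1*‖∇f u‖) * q
        have hS0 : 0 ≤ L0 + L1 * S := by
          by_cases hbdd : BddAbove ((fun w => ‖gradient f w‖) '' segment ℝ u v)
          · have : ‖gradient f u‖ ≤ S :=
              le_csSup hbdd ⟨u, left_mem_segment ℝ u v, rfl⟩
            nlinarith [norm_nonneg (gradient f u)]
          · rw [hSdef, Real.sSup_of_not_bddAbove hbdd]; simpa
        have hSq : L0 + L1 * S ≤ (L0 + L1 * ‖gradient f u‖) * q := by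
          nlinarith [mul_le_mul_of_nonneg_left haux (le_of_lt hq0)]
        have hSA : L0 + L1 * S ≤ A * q ^ (k + 1) := by
          calc L0 + L1 * S ≤ (L0 + L1 * ‖gradient f u‖) * q := hSq
            _ ≤ (A * q ^ k) * q := by
                apply mul_le_mul_of_nonneg_right ih1 (le_of_lt hq0)
            _ = A * q ^ (k + 1) := by ring
        have hstep : ‖gradient f u - gradient f v‖ ≤ (L0 + L1 * S) * (r / n) := by
          have := hsmooth u v
          rw [hznorm k] at this
          exact this
        constructor
        · have hnv : ‖gradient f v‖ ≤ ‖gradient f u‖ + ‖gradient f u - gradient f v‖ := by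
            linarith [abs_le.mp (abs_norm_sub_norm_le (gradient f v) (gradient f u)),
              norm_sub_rev (gradient f u) (gradient f v)]
          have h1 : L0 + L1 * ‖gradient f v‖ ≤
              (L0 + L1 * ‖gradient f u‖) + c * (L0 + L1 * S) := by
            have := mul_le_mul_of_nonneg_left hstep hL1
            have hrw : L1 * ((L0 + L1 * S) * (r / n)) = c * (L0 + L1 * S) := by
              rw [hcdef]; ring
            nlinarith
          have h2 : c * (L0 + L1 * S) ≤ c * (A * q ^ (k+1)) :=
            mul_le_mul_of_nonneg_left hSA hc0
          have hq' : q = 1 + c * q := by nlinarith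
          have hAq : 0 ≤ A * q ^ k := by positivity
          calc L0 + L1 * ‖gradient f v‖
              ≤ (A * q ^ k) + c * (A * q ^ (k+1)) := by linarith
            _ = A * q ^ k * (1 + c * q) := by ring
            _ = A * q ^ k * q := by rw [← hq']
            _ = A * q ^ (k + 1) := by ring
        · have htri : ‖gradient f v - gradient f x‖ ≤
              ‖gradient f u - gradient f x‖ + ‖gradient f u - gradient f v‖ := by
            have := norm_sub_le_norm_sub_add_norm_sub (gradient f v) (gradient f u) (gradient f x)
            linarith [norm_sub_rev (gradient f v) (gradient f u)]
          have h5 : A * (r / n) * k * q ^ k ≤ A * (r / n) * k * q ^ (k+1) := by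
            apply mul_le_mul_of_nonneg_left (pow_le_pow_right₀ hq1 (Nat.le_succ k))
            positivity
          have h6 : (L0 + L1 * S) * (r / n) ≤ A * q ^ (k+1) * (r / n) := by
            apply mul_le_mul_of_nonneg_right hSA (by positivity)
          have : ‖gradient f v - gradient f x‖ ≤
              A * (r / n) * k * q ^ (k+1) + A * q ^ (k+1) * (r / n) := by linarith
          calc ‖gradient f v - gradient f x‖
              ≤ A * (r / n) * k * q ^ (k+1) + A * q ^ (k+1) * (r / n) := this
            _ = A * (r / n) * ((k:ℝ) + 1) * q ^ (k+1) := by ring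
            _ = A * (r / n) * ((k+1 : ℕ):ℝ) * q ^ (k+1) := by push_cast; ring
        done
    have := (ind n).2
    rw [hzn] at this
    have hrn : A * (r / n) * n * q ^ n = A * r * q ^ n := by
      field_simp
    rw [hrn] at this
    exact this
  -- limit
  have hlim : Filter.Tendsto (fun n : ℕ => A * r * ((1 - L1 * (r / n))⁻¹) ^ n)
      Filter.atTop (nhds (A * r * Real.exp (L1 * r))) := by
    have h1 : Filter.Tendsto (fun n : ℕ => (1 + (-(L1 * r)) / n) ^ n)
        Filter.atTop (nhds (Real.exp (-(L1 * r)))) :=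
      Real.tendsto_one_add_div_pow_exp (-(L1 * r))
    have h1' : Filter.Tendsto (fun n : ℕ => (1 - L1 * (r / n)) ^ n)
        Filter.atTop (nhds (Real.exp (-(L1 * r)))) := by
      apply h1.congr
      intro n
      congr 1
      ring
    have h2 : Filter.Tendsto (fun n : ℕ => ((1 - L1 * (r / n)) ^ n)⁻¹)
        Filter.atTop (nhds (Real.exp (L1 * r))) := by
      have := h1'.inv₀ (Real.exp_ne_zero _)
      rwa [← Real.exp_neg, neg_neg] at this
    have h3 : Filter.Tendsto (fun n : ℕ => ((1 - L1 * (r / n))⁻¹) ^ n)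
        Filter.atTop (nhds (Real.exp (L1 * r))) := by
      apply h2.congr
      intro n
      rw [inv_pow]
    exact (tendsto_const_nhds.mul h3)
  have hev : ∀ᶠ n : ℕ in Filter.atTop, ‖gradient f y - gradient f x‖ ≤
      A * r * ((1 - L1 * (r / n))⁻¹) ^ n :=
    (Filter.Tendsto.eventually_gt_atTop tendsto_natCast_atTop_atTop (L1 * r)).mono key
  have hfin : ‖gradient f y - gradient f x‖ ≤ A * r * Real.exp (L1 * r) :=
    ge_of_tendsto hlim hev
  have : A * r * Real.exp (L1 * r) = A * Real.exp (L1 * r) * r := by ring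
  linarith
end

section
/- Let f be convex, differentiable, (L0, L1)-smooth with minimizer x* and minimum f*. Suppose ‖∇f(x_k)‖ ≤ L0/L1 and γ ≤ 1/(16 L0). Let x_{k+1} = x_k − γ g_k for any g_k ∈ R^d, and set θ_k = g_k − ∇f(x_k). Then γ(f(x_k) − f*) ≤ ‖x_k − x*‖² − ‖x_{k+1} − x*‖² − 2γ⟨θ_k, x_k − x*⟩ + 2γ²‖θ_k‖². -/
open Real
open scoped RealInnerProductSpace

private lemma conv_grad {d : ℕ} {f : EuclideanSpace ℝ (Fin d) → ℝ}
    (hconv : ConvexOn ℝ Set.univ f) (hf : Differentiable ℝ f)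
    (x y : EuclideanSpace ℝ (Fin d)) :
    f x + ⟪gradient f x, y - x⟫ ≤ f y := by
  set φ : ℝ → ℝ := fun t => f (x + t • (y - x)) with hφdef
  have hphiconv : ConvexOn ℝ Set.univ φ := by
    have h := hconv.comp_affineMap (AffineMap.lineMap x y)
    have : φ = f ∘ (AffineMap.lineMap x y) := by
      funext t
      simp [hφdef, AffineMap.lineMap_apply, add_comm]
    rw [this]
    simpa using h
  have h1 : HasDerivAt (fun t : ℝ => x + t • (y - x)) (y - x) 0 := by
    simpa using ((hasDerivAt_id (0:ℝ)).smul_const (y - x)).const_add x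
  have h2 : HasFDerivAt f (InnerProductSpace.toDual ℝ _ (gradient f x))
      (x + (0:ℝ) • (y - x)) := by
    simpa using hasGradientAt_iff_hasFDerivAt.mp (hf x).hasGradientAt
  have hderiv : HasDerivAt φ ⟪gradient f x, y - x⟫ 0 := by
    have h3 := h2.comp_hasDerivAt 0 h1
    simpa [hφdef, InnerProductSpace.toDual_apply_apply, Function.comp_def] using h3
  have hs := hphiconv.le_slope_of_hasDerivAt (Set.mem_univ (0:ℝ))
    (Set.mem_univ (1:ℝ)) one_pos hderiv
  have hφ0 : φ 0 = f x := by simp [hφdef]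
  have hφ1 : φ 1 = f y := by simp [hφdef]
  rw [slope_def_field, hφ0, hφ1] at hs
  simp only [div_one, sub_zero] at hs
  linarith
set_option maxHeartbeats 1000000

private lemma grad_bound {d : ℕ} {f : EuclideanSpace ℝ (Fin d) → ℝ}
    {L0 L1 : ℝ} (hL0 : 0 < L0) (hL1 : 0 < L1)
    (hsmooth : ∀ x y, ‖gradient f x - gradient f y‖ ≤
      (L0 + L1 * sSup ((fun u => ‖gradient f u‖) '' segment ℝ x y)) * ‖x - y‖)
    (xk : EuclideanSpace ℝ (Fin d)) (hgrad : ‖gradient f xk‖ ≤ L0 / L1)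
    {s : ℝ} (hs0 : 0 ≤ s) (hs : s ≤ 1/(4*L0)) :
    ‖gradient f (xk - s • gradient f xk) - gradient f xk‖
      ≤ 3 * L0 * (s * ‖gradient f xk‖) := by
  set g := gradient f xk with hg
  set u := xk - s • g with hu
  have hgnn : (0:ℝ) ≤ ‖g‖ := norm_nonneg _
  have husub : ‖u - xk‖ = s * ‖g‖ := by
    have h : u - xk = -(s • g) := by rw [hu]; abel
    rw [h, norm_neg, norm_smul, Real.norm_eq_abs, abs_of_nonneg hs0]
  have hL1g : L1 * ‖g‖ ≤ L0 := by
    rw [div_eq_mul_inv] at hgrad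
    calc L1 * ‖g‖ ≤ L1 * (L0 * L1⁻¹) := by
          exact mul_le_mul_of_nonneg_left hgrad hL1.le
      _ = L0 := by field_simp
  have hsg : s * ‖g‖ ≤ 1 / (4 * L1) := by
    have h1 : s * ‖g‖ ≤ s * (L0 / L1) := mul_le_mul_of_nonneg_left hgrad hs0
    have h2 : s * (L0 / L1) ≤ (1/(4*L0)) * (L0 / L1) := by
      apply mul_le_mul_of_nonneg_right hs (by positivity)
    have h3 : (1/(4*L0)) * (L0 / L1) = 1 / (4 * L1) := by field_simp
    linarith
  have hsL0 : L0 * s ≤ 1/4 := by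
    have := mul_le_mul_of_nonneg_left hs hL0.le
    calc L0 * s ≤ L0 * (1/(4*L0)) := this
      _ = 1/4 := by field_simp
  have hvnorm : ∀ v ∈ segment ℝ xk u, ‖v - xk‖ ≤ s * ‖g‖ := by
    intro v hv
    obtain ⟨a, b, ha, hb, hab, rfl⟩ := hv
    have heq : a • xk + b • u - xk = b • (u - xk) := by
      have hb1 : a = 1 - b := by linarith
      rw [hb1]; module
    rw [heq, norm_smul, Real.norm_eq_abs, abs_of_nonneg hb, husub]
    nlinarith [mul_nonneg hs0 hgnn]
  have hmain := hsmooth u xk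
  rw [segment_symm] at hmain
  by_cases hbdd : BddAbove ((fun u => ‖gradient f u‖) '' segment ℝ xk u)
  · set S := sSup ((fun u => ‖gradient f u‖) '' segment ℝ xk u) with hS
    clear_value S
    have hne : ((fun u => ‖gradient f u‖) '' segment ℝ xk u).Nonempty :=
      ⟨‖g‖, ⟨xk, left_mem_segment ℝ xk u, rfl⟩⟩
    have hSg : ‖g‖ ≤ S := by
      rw [hS]; exact le_csSup hbdd ⟨xk, left_mem_segment ℝ xk u, rfl⟩
    have hS0 : (0:ℝ) ≤ S := le_trans hgnn hSg
    have hSle : S ≤ ‖g‖ + (L0 + L1 * S) * (s * ‖g‖) := by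
      rw [hS]
      apply csSup_le hne
      rintro _ ⟨v, hv, rfl⟩
      rw [← hS]
      show ‖gradient f v‖ ≤ ‖g‖ + (L0 + L1 * S) * (s * ‖g‖)
      have hsub : segment ℝ xk v ⊆ segment ℝ xk u :=
        (convex_segment xk u).segment_subset (left_mem_segment ℝ xk u) hv
      have hMv : sSup ((fun u => ‖gradient f u‖) '' segment ℝ xk v) ≤ S := by
        rw [hS]
        exact csSup_le_csSup hbdd ⟨‖g‖, ⟨xk, left_mem_segment ℝ xk v, rfl⟩⟩
          (Set.image_mono hsub)
      have h4 := hsmooth v xk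
      rw [segment_symm] at h4
      have h5 : ‖gradient f v‖ - ‖g‖ ≤ ‖gradient f v - g‖ :=
        norm_sub_norm_le _ _
      have hvn := hvnorm v hv
      have hvn0 : (0:ℝ) ≤ ‖v - xk‖ := norm_nonneg _
      have h6 : (L0 + L1 * sSup ((fun u => ‖gradient f u‖) '' segment ℝ xk v))
          * ‖v - xk‖ ≤ (L0 + L1 * S) * (s * ‖g‖) :=
        calc (L0 + L1 * sSup ((fun u => ‖gradient f u‖) '' segment ℝ xk v))
            * ‖v - xk‖ ≤ (L0 + L1 * S) * ‖v - xk‖ := by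
              apply mul_le_mul_of_nonneg_right _ hvn0
              nlinarith
          _ ≤ (L0 + L1 * S) * (s * ‖g‖) := by
              apply mul_le_mul_of_nonneg_left hvn
              nlinarith
      linarith
    have e1 : L1 * S * (s * ‖g‖) ≤ S / 4 := by
      have h7 := mul_le_mul_of_nonneg_left hsg (mul_nonneg hL1.le hS0)
      have e : L1 * S * (1/(4*L1)) = S/4 := by field_simp
      linarith
    have e2 : L0 * (s * ‖g‖) ≤ ‖g‖ / 4 := by
      nlinarith [mul_le_mul_of_nonneg_right hsL0 hgnn]
    have hS2 : S ≤ 2 * ‖g‖ := by nlinarith [hSle, e1, e2]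
    calc ‖gradient f u - g‖ ≤ (L0 + L1 * S) * ‖u - xk‖ := hmain
      _ ≤ 3 * L0 * (s * ‖g‖) := by
          rw [husub]
          have e3 : L1 * S ≤ 2 * L0 := by
            nlinarith [mul_le_mul_of_nonneg_left hS2 hL1.le]
          nlinarith [mul_nonneg (by linarith : (0:ℝ) ≤ 2*L0 - L1*S)
            (mul_nonneg hs0 hgnn)]
  · rw [Real.sSup_of_not_bddAbove hbdd] at hmain
    rw [husub] at hmain
    nlinarith [mul_nonneg hs0 hgnn]
private lemma grad_sq_le {d : ℕ} {f : EuclideanSpace ℝ (Fin d) → ℝ}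
    (hconv : ConvexOn ℝ Set.univ f) (hf : Differentiable ℝ f)
    {L0 L1 : ℝ} (hL0 : 0 < L0) (hL1 : 0 < L1)
    (hsmooth : ∀ x y, ‖gradient f x - gradient f y‖ ≤
      (L0 + L1 * sSup ((fun u => ‖gradient f u‖) '' segment ℝ x y)) * ‖x - y‖)
    (xstar : EuclideanSpace ℝ (Fin d)) (hmin : ∀ y, f xstar ≤ f y)
    (xk : EuclideanSpace ℝ (Fin d)) (hgrad : ‖gradient f xk‖ ≤ L0 / L1) :
    ‖gradient f xk‖ ^ 2 ≤ 8 * L0 * (f xk - f xstar) := by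
  set g := gradient f xk with hg
  set δ : ℝ := 1 / (12 * L0) with hδ
  have hδ0 : (0:ℝ) ≤ δ := by positivity
  have hb1 : ((1):ℝ) * δ ≤ 1 / (4 * L0) := by
    rw [hδ, mul_one_div, div_le_div_iff₀ (by positivity) (by positivity)]; nlinarith
  have hb2 : ((2):ℝ) * δ ≤ 1 / (4 * L0) := by
    rw [hδ, mul_one_div, div_le_div_iff₀ (by positivity) (by positivity)]; nlinarith
  have hb3 : ((3):ℝ) * δ ≤ 1 / (4 * L0) := by
    rw [hδ, mul_one_div, div_le_div_iff₀ (by positivity) (by positivity)]; nlinarith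
  set y1 := xk - ((1:ℝ)*δ) • g with hy1
  set y2 := xk - ((2:ℝ)*δ) • g with hy2
  set y3 := xk - ((3:ℝ)*δ) • g with hy3
  have hk1 := grad_bound hL0 hL1 hsmooth xk hgrad (by positivity) hb1
  have hk2 := grad_bound hL0 hL1 hsmooth xk hgrad (by positivity) hb2
  have hk3 := grad_bound hL0 hL1 hsmooth xk hgrad (by positivity) hb3
  rw [← hg, ← hy1] at hk1
  rw [← hg, ← hy2] at hk2
  rw [← hg, ← hy3] at hk3
  have he1 : 3 * L0 * (((1:ℝ)*δ) * ‖g‖) * ‖g‖ = (1/4) * ‖g‖^2 := by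
    rw [hδ]; field_simp; ring
  have he2 : 3 * L0 * (((2:ℝ)*δ) * ‖g‖) * ‖g‖ = (1/2) * ‖g‖^2 := by
    rw [hδ]; field_simp; ring
  have he3 : 3 * L0 * (((3:ℝ)*δ) * ‖g‖) * ‖g‖ = (3/4) * ‖g‖^2 := by
    rw [hδ]; field_simp; ring
  have hinner : ∀ (y : EuclideanSpace ℝ (Fin d)) (c : ℝ),
      ‖gradient f y - g‖ ≤ c → ‖g‖^2 - c * ‖g‖ ≤ ⟪gradient f y, g⟫ := by
    intro y c hc
    have h1 : ⟪gradient f y, g⟫ = ⟪g, g⟫ + ⟪gradient f y - g, g⟫ := by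
      rw [inner_sub_left]; ring
    have h2 : |⟪gradient f y - g, g⟫| ≤ ‖gradient f y - g‖ * ‖g‖ :=
      abs_real_inner_le_norm _ _
    have h3 : ‖gradient f y - g‖ * ‖g‖ ≤ c * ‖g‖ :=
      mul_le_mul_of_nonneg_right hc (norm_nonneg _)
    have h4 : ⟪g, g⟫ = ‖g‖^2 := real_inner_self_eq_norm_sq g
    have := abs_le.mp h2
    linarith
  have hi1 := hinner y1 _ hk1
  have hi2 := hinner y2 _ hk2
  have hi3 := hinner y3 _ hk3
  rw [he1] at hi1; rw [he2] at hi2; rw [he3] at hi3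
  -- convexity telescope
  have hc1 := conv_grad hconv hf y1 xk
  have hc2 := conv_grad hconv hf y2 y1
  have hc3 := conv_grad hconv hf y3 y2
  have hd1 : xk - y1 = δ • g := by rw [hy1]; module
  have hd2 : y1 - y2 = δ • g := by rw [hy1, hy2]; module
  have hd3 : y2 - y3 = δ • g := by rw [hy2, hy3]; module
  rw [hd1, real_inner_smul_right] at hc1
  rw [hd2, real_inner_smul_right] at hc2
  rw [hd3, real_inner_smul_right] at hc3
  have h4 := hmin y3
  have m1 := mul_le_mul_of_nonneg_left hi1 hδ0
  have m2 := mul_le_mul_of_nonneg_left hi2 hδ0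
  have m3 := mul_le_mul_of_nonneg_left hi3 hδ0
  have hsum : ‖g‖^2 / (8*L0) ≤ f xk - f xstar := by
    have e : δ * (‖g‖^2 - 1/4 * ‖g‖^2) + δ * (‖g‖^2 - 1/2 * ‖g‖^2)
        + δ * (‖g‖^2 - 3/4 * ‖g‖^2) = ‖g‖^2/(8*L0) := by
      rw [hδ]; field_simp; ring
    linarith
  rw [div_le_iff₀ (by positivity)] at hsum
  linarith

theorem descent_case1 {d : ℕ} (f : EuclideanSpace ℝ (Fin d) → ℝ)
    (hconv : ConvexOn ℝ Set.univ f) (hf : Differentiable ℝ f)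
    (L0 L1 : ℝ) (hL0 : 0 < L0) (hL1 : 0 < L1)
    (hsmooth : ∀ x y, ‖gradient f x - gradient f y‖ ≤
      (L0 + L1 * sSup ((fun u => ‖gradient f u‖) '' segment ℝ x y)) * ‖x - y‖)
    (xstar : EuclideanSpace ℝ (Fin d)) (hmin : ∀ y, f xstar ≤ f y)
    (γ : ℝ) (hγ : 0 < γ) (hγle : γ ≤ 1 / (16 * L0))
    (xk gk : EuclideanSpace ℝ (Fin d))
    (hgrad : ‖gradient f xk‖ ≤ L0 / L1) :
    γ * (f xk - f xstar) ≤ ‖xk - xstar‖ ^ 2 - ‖(xk - γ • gk) - xstar‖ ^ 2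
      - 2 * γ * ⟪gk - gradient f xk, xk - xstar⟫
      + 2 * γ ^ 2 * ‖gk - gradient f xk‖ ^ 2 := by
  set g := gradient f xk with hg
  have hB := grad_sq_le hconv hf hL0 hL1 hsmooth xstar hmin xk hgrad
  rw [← hg] at hB
  have hA := conv_grad hconv hf xk xstar
  rw [← hg] at hA
  have hA' : f xk - f xstar ≤ ⟪g, xk - xstar⟫ := by
    have hneg : ⟪g, xstar - xk⟫ = -⟪g, xk - xstar⟫ := by
      rw [← inner_neg_right]; congr 1; abel
    linarith [hA, hneg.le, hneg.ge]
  have hC : 0 ≤ f xk - f xstar := by linarith [hmin xk]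
  have e1 : ‖(xk - γ • gk) - xstar‖^2
      = ‖xk - xstar‖^2 - 2*γ*⟪gk, xk - xstar⟫ + γ^2*‖gk‖^2 := by
    have h : (xk - γ • gk) - xstar = (xk - xstar) - γ • gk := by abel
    rw [h, norm_sub_sq_real, real_inner_smul_right, norm_smul, Real.norm_eq_abs,
      real_inner_comm, mul_pow, sq_abs]
    ring
  have e2 : ⟪gk - g, xk - xstar⟫ = ⟪gk, xk - xstar⟫ - ⟪g, xk - xstar⟫ := by
    rw [inner_sub_left]
  have e3 : ‖gk - g‖^2 = ‖gk‖^2 - 2*⟪gk, g⟫ + ‖g‖^2 := norm_sub_sq_real gk g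
  have e4' : ‖gk - (2:ℝ) • g‖^2 = ‖gk‖^2 - 4*⟪gk, g⟫ + 4*‖g‖^2 := by
    rw [norm_sub_sq_real, real_inner_smul_right, norm_smul, Real.norm_eq_abs,
      mul_pow, sq_abs]
    norm_num
    ring
  have e4 : (0:ℝ) ≤ γ^2 * (‖gk‖^2 - 4*⟪gk, g⟫ + 4*‖g‖^2) := by
    rw [← e4']; positivity
  have hγ16 : γ * (16 * L0) ≤ 1 := (le_div_iff₀ (by positivity)).mp hγle
  have h5 : 2*γ*‖g‖^2 ≤ f xk - f xstar := by
    nlinarith [mul_le_mul_of_nonneg_left hB (by positivity : (0:ℝ) ≤ 2*γ),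
      mul_nonneg (by nlinarith : (0:ℝ) ≤ 1 - 16*L0*γ) hC]
  have c1 := mul_le_mul_of_nonneg_left hA' hγ.le
  have c2 := mul_le_mul_of_nonneg_left h5 hγ.le
  rw [e1, e2, e3]
  nlinarith [e4, c1, c2]
end

section
/- Let f be convex, differentiable, (L0, L1)-smooth with minimizer x*. Suppose ‖∇f(x_k)‖ > λ/2 ≥ L0/L1 and γ ≤ 1/(16 L1 λ). Let g_k = clip(∇f(x_k) + ξ_k, λ) for some noise vector ξ_k, x_{k+1} = x_k − γ g_k, and θ̂_k = g_k − clip(∇f(x_k), λ/2). Then ‖x_{k+1} − x*‖² ≤ ‖x_k − x*‖² − γλ/(16 L1) − 2γ⟨θ̂_k, x_k − x*⟩. -/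
open MeasureTheory Real
open scoped RealInnerProductSpace

noncomputable def clip {d : ℕ} (x : EuclideanSpace ℝ (Fin d)) (lam : ℝ) :
    EuclideanSpace ℝ (Fin d) := min 1 (lam / ‖x‖) • x

section aux
variable {d : ℕ}

lemma fderiv_eq_inner_gradient (f : EuclideanSpace ℝ (Fin d) → ℝ) (z v : EuclideanSpace ℝ (Fin d)) :
    fderiv ℝ f z v = ⟪gradient f z, v⟫ := by
  rw [show gradient f z = (InnerProductSpace.toDual ℝ _).symm (fderiv ℝ f z) from rfl]
  rw [← InnerProductSpace.toDual_apply_apply, (InnerProductSpace.toDual ℝ _).apply_symm_apply]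

lemma hasDerivAt_comp_line (f : EuclideanSpace ℝ (Fin d) → ℝ) (hf : Differentiable ℝ f)
    (c v : EuclideanSpace ℝ (Fin d)) (t : ℝ) :
    HasDerivAt (fun s : ℝ => f (c + s • v)) ⟪gradient f (c + t • v), v⟫ t := by
  have hl : HasDerivAt (fun s : ℝ => c + s • v) v t := by
    simpa using ((hasDerivAt_id t).smul_const v).const_add c
  have := (hf (c + t • v)).hasFDerivAt.comp_hasDerivAt t hl
  rw [fderiv_eq_inner_gradient f] at this
  exact this

lemma convex_grad_ineq (f : EuclideanSpace ℝ (Fin d) → ℝ)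
    (hconv : ConvexOn ℝ Set.univ f) (hf : Differentiable ℝ f)
    (x y : EuclideanSpace ℝ (Fin d)) :
    f x - f y ≤ ⟪gradient f x, x - y⟫ := by
  set v := x - y with hv
  have hφconv : ConvexOn ℝ Set.univ (fun t : ℝ => f (y + t • v)) := by
    refine ⟨convex_univ, ?_⟩
    intro p _ q _ a b ha hb hab
    have h1 : y + (a • p + b • q) • v = a • (y + p • v) + b • (y + q • v) := by
      have h2 : a • (y + p • v) + b • (y + q • v) = (a + b) • y + (a • p + b • q) • v := by
        simp only [smul_eq_mul]; module
      rw [h2, hab, one_smul]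
    simp only [h1]
    exact hconv.2 (Set.mem_univ _) (Set.mem_univ _) ha hb hab
  have hd : HasDerivAt (fun t : ℝ => f (y + t • v)) ⟪gradient f (y + (1:ℝ) • v), v⟫ 1 :=
    hasDerivAt_comp_line f hf y v 1
  have hyd : y + (1:ℝ) • v = x := by simp [hv]
  rw [hyd] at hd
  have := hφconv.slope_le_of_hasDerivAt (Set.mem_univ (0:ℝ)) (Set.mem_univ (1:ℝ))
    one_pos hd
  have hyx : y + v = x := by simp [hv]
  simpa [slope_def_field, hyx] using this

lemma descent_lemma (f : EuclideanSpace ℝ (Fin d) → ℝ) (hf : Differentiable ℝ f)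
    (x y : EuclideanSpace ℝ (Fin d)) (C : ℝ)
    (hlip : ∀ z ∈ segment ℝ x y, ‖gradient f z - gradient f x‖ ≤ C * ‖z - x‖) :
    f y ≤ f x + ⟪gradient f x, y - x⟫ + C / 2 * ‖y - x‖ ^ 2 := by
  set v := y - x with hv
  set g := gradient f x with hg
  set ψ : ℝ → ℝ := fun t => f (x + t • v) - t * ⟪g, v⟫ - C / 2 * t ^ 2 * ‖v‖ ^ 2 with hψ
  have hψd : ∀ t : ℝ, HasDerivAt ψ
      (⟪gradient f (x + t • v), v⟫ - ⟪g, v⟫ - C * t * ‖v‖ ^ 2) t := by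
    intro t
    have h1 := hasDerivAt_comp_line f hf x v t
    have h2 : HasDerivAt (fun t : ℝ => t * ⟪g, v⟫) ⟪g, v⟫ t := hasDerivAt_mul_const _
    have h3 : HasDerivAt (fun t : ℝ => C / 2 * t ^ 2 * ‖v‖ ^ 2) (C * t * ‖v‖ ^ 2) t := by
      have := ((hasDerivAt_pow 2 t).const_mul (C / 2)).mul_const (‖v‖ ^ 2)
      refine this.congr_deriv ?_
      push_cast
      ring
    exact (h1.sub h2).sub h3
  have hdiff : Differentiable ℝ ψ := fun t => (hψd t).differentiableAt
  have hanti : AntitoneOn ψ (Set.Icc 0 1) := by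
    refine antitoneOn_of_deriv_nonpos (convex_Icc 0 1) hdiff.continuous.continuousOn
      (hdiff.differentiableOn) ?_
    intro t ht
    rw [interior_Icc] at ht
    rw [(hψd t).deriv]
    have hz : x + t • v ∈ segment ℝ x y := by
      rw [segment_eq_image']
      exact ⟨t, ⟨le_of_lt ht.1, le_of_lt ht.2⟩, rfl⟩
    have h4 := hlip _ hz
    have h5 : ⟪gradient f (x + t • v) - g, v⟫ ≤ ‖gradient f (x + t • v) - g‖ * ‖v‖ :=
      real_inner_le_norm _ _
    have h6 : ‖x + t • v - x‖ = t * ‖v‖ := by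
      rw [add_sub_cancel_left, norm_smul, Real.norm_eq_abs, abs_of_pos ht.1]
    rw [h6] at h4
    rw [inner_sub_left] at h5
    nlinarith [norm_nonneg v, mul_le_mul_of_nonneg_right h4 (norm_nonneg v)]
  have h7 := hanti (Set.left_mem_Icc.2 zero_le_one) (Set.right_mem_Icc.2 zero_le_one) zero_le_one
  simp only [hψ, one_smul, zero_smul, add_zero, zero_mul, one_pow, zero_pow, sub_zero,
    one_mul, mul_zero] at h7
  have h8' : x + v = y := by simp [hv]
  rw [h8'] at h7
  linarith

end aux

set_option maxHeartbeats 4000000 in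
theorem descent_case3 {d : ℕ} (f : EuclideanSpace ℝ (Fin d) → ℝ)
    (hconv : ConvexOn ℝ Set.univ f) (hf : Differentiable ℝ f)
    (L0 L1 : ℝ) (hL0 : 0 < L0) (hL1 : 0 < L1)
    (hsmooth : ∀ x y, ‖gradient f x - gradient f y‖ ≤
      (L0 + L1 * sSup ((fun u => ‖gradient f u‖) '' segment ℝ x y)) * ‖x - y‖)
    (xstar : EuclideanSpace ℝ (Fin d)) (hmin : ∀ y, f xstar ≤ f y)
    (lam : ℝ) (hlam : 0 < lam)
    (γ : ℝ) (hγ : 0 < γ) (hγle : γ ≤ 1 / (16 * L1 * lam))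
    (xk ξk : EuclideanSpace ℝ (Fin d))
    (hgrad : lam / 2 < ‖gradient f xk‖) (hlam_lo : L0 / L1 ≤ lam / 2) :
    ‖(xk - γ • clip (gradient f xk + ξk) lam) - xstar‖ ^ 2 ≤ ‖xk - xstar‖ ^ 2
      - γ * lam / (16 * L1)
      - 2 * γ * ⟪clip (gradient f xk + ξk) lam - clip (gradient f xk) (lam / 2),
          xk - xstar⟫ := by
  set g := gradient f xk with hgdef
  set G := ‖g‖ with hGdef
  have hGpos : 0 < G := lt_trans (by positivity) hgrad
  have hL0G : L0 ≤ L1 * G := by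
    have h1 : L0 / L1 ≤ G := le_of_lt (lt_of_le_of_lt hlam_lo hgrad)
    nlinarith [(div_le_iff₀ hL1).mp h1]
  set C := L0 + 3 * L1 * G with hCdef
  have hC : 0 < C := by positivity
  set η := 1 / C with hηdef
  have hη : 0 < η := by positivity
  have hηC : η * C = 1 := by rw [hηdef]; exact one_div_mul_cancel hC.ne'
  set y := xk - η • g with hydef
  have hyx : ‖y - xk‖ = η * G := by
    rw [hydef]
    rw [sub_sub_cancel_left, norm_neg, norm_smul, Real.norm_eq_abs, abs_of_pos hη]
  have hseg_dist : ∀ z ∈ segment ℝ xk y, ‖z - xk‖ ≤ η * G := by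
    intro z hz
    have hsub : segment ℝ xk y ⊆ Metric.closedBall xk (η * G) := by
      apply (convex_closedBall xk (η * G)).segment_subset
      · exact Metric.mem_closedBall_self (by positivity)
      · rw [Metric.mem_closedBall, dist_eq_norm, hyx]
    have := hsub hz
    rwa [Metric.mem_closedBall, dist_eq_norm] at this
  have hA : L1 * (η * G) ≤ 1 / 3 := by
    have h3 : 3 * (L1 * G) ≤ C := by rw [hCdef]; linarith
    calc L1 * (η * G) = (L1 * G) * η := by ring
      _ ≤ (C / 3) * η := by nlinarith [hη.le]
      _ = (η * C) / 3 := by ring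
      _ = 1 / 3 := by rw [hηC]
  have hB : L0 * (η * G) ≤ G / 3 := by
    have h3 : 3 * L0 ≤ C := by
      rw [hCdef]; nlinarith [mul_pos hL1 hGpos]
    calc L0 * (η * G) = (η * G) * L0 := by ring
      _ ≤ (η * G) * (C / 3) := by nlinarith [mul_nonneg hη.le hGpos.le]
      _ = (η * C) * G / 3 := by ring
      _ = G / 3 := by rw [hηC]; ring
  -- Step B : gradient bounded by 2G on the segment
  have hbound : ∀ z ∈ segment ℝ xk y, ‖gradient f z‖ ≤ 2 * G := by
    intro z hz
    have hsubz : segment ℝ xk z ⊆ segment ℝ xk y :=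
      (convex_segment xk y).segment_subset (left_mem_segment ℝ xk y) hz
    set S := (fun u => ‖gradient f u‖) '' segment ℝ xk z with hSdef
    by_cases hbdd : BddAbove S
    · have hmem : ‖gradient f z‖ ≤ sSup S :=
        le_csSup hbdd ⟨z, right_mem_segment ℝ xk z, rfl⟩
      have hGm : G ≤ sSup S := le_csSup hbdd ⟨xk, left_mem_segment ℝ xk z, rfl⟩
      have hsup_le : sSup S ≤ G + (L0 + L1 * sSup S) * (η * G) := by
        apply Real.sSup_le
        · rintro a ⟨w, hw, rfl⟩
          have h1 := hsmooth xk w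
          have h2 : sSup ((fun u => ‖gradient f u‖) '' segment ℝ xk w) ≤ sSup S := by
            apply csSup_le_csSup hbdd
            · exact ⟨‖gradient f xk‖, ⟨xk, left_mem_segment ℝ xk w, rfl⟩⟩
            · exact Set.image_mono
                ((convex_segment xk z).segment_subset (left_mem_segment ℝ xk z) hw)
          have h3 : ‖xk - w‖ ≤ η * G := by
            rw [norm_sub_rev]; exact hseg_dist w (hsubz hw)
          have h4 : ‖gradient f w‖ - ‖gradient f xk‖ ≤ ‖gradient f xk - gradient f w‖ := by
            rw [norm_sub_rev]
            exact norm_sub_norm_le _ _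
          have h5 : (L0 + L1 * sSup ((fun u => ‖gradient f u‖) '' segment ℝ xk w)) * ‖xk - w‖
              ≤ (L0 + L1 * sSup S) * (η * G) := by
            apply mul_le_mul (by nlinarith) h3 (norm_nonneg _) (by nlinarith)
          simp only [← hgdef, ← hGdef] at h4
          nlinarith
        · have hm0 : 0 ≤ L0 + L1 * sSup S := by nlinarith
          nlinarith [mul_nonneg hm0 (mul_pos hη hGpos).le]
      have hm0 : 0 ≤ sSup S := le_trans hGpos.le hGm
      have h6 : (L1 * (η * G)) * sSup S ≤ (1/3) * sSup S :=
        mul_le_mul_of_nonneg_right hA hm0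
      have hfin : sSup S ≤ 2 * G := by nlinarith [hsup_le, h6, hB]
      linarith
    · have h0 : sSup S = 0 := Real.sSup_of_not_bddAbove hbdd
      have h1 := hsmooth xk z
      rw [← hSdef, h0] at h1
      have h3 : ‖xk - z‖ ≤ η * G := by rw [norm_sub_rev]; exact hseg_dist z hz
      have h4 : ‖gradient f z‖ - ‖gradient f xk‖ ≤ ‖gradient f xk - gradient f z‖ := by
        rw [norm_sub_rev]; exact norm_sub_norm_le _ _
      simp only [← hgdef, ← hGdef] at h4
      nlinarith [norm_nonneg (xk - z)]
  -- Step C : Lipschitz-type bound relative to xk on the segment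
  have hlip : ∀ z ∈ segment ℝ xk y,
      ‖gradient f z - gradient f xk‖ ≤ (L0 + 2 * L1 * G) * ‖z - xk‖ := by
    intro z hz
    have hsubz : segment ℝ xk z ⊆ segment ℝ xk y :=
      (convex_segment xk y).segment_subset (left_mem_segment ℝ xk y) hz
    have h1 := hsmooth xk z
    have h2 : sSup ((fun u => ‖gradient f u‖) '' segment ℝ xk z) ≤ 2 * G := by
      apply Real.sSup_le
      · rintro a ⟨w, hw, rfl⟩
        exact hbound w (hsubz hw)
      · positivity
    rw [norm_sub_rev, show ‖z - xk‖ = ‖xk - z‖ from norm_sub_rev _ _]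
    calc ‖gradient f xk - gradient f z‖
        ≤ (L0 + L1 * sSup ((fun u => ‖gradient f u‖) '' segment ℝ xk z)) * ‖xk - z‖ := h1
      _ ≤ (L0 + 2 * L1 * G) * ‖xk - z‖ := by
          apply mul_le_mul_of_nonneg_right _ (norm_nonneg _)
          nlinarith
  -- Step D : descent
  have hdesc := descent_lemma f hf xk y (L0 + 2 * L1 * G) (by simpa [← hgdef] using hlip)
  have hyxk : y - xk = -(η • g) := by rw [hydef]; abel
  have hinner_yx : ⟪g, y - xk⟫ = -(η * G ^ 2) := by
    rw [hyxk, inner_neg_right, real_inner_smul_right, real_inner_self_eq_norm_sq, ← hGdef]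
  rw [hinner_yx, hyx] at hdesc
  -- Step E : lower bound on f xk - f xstar and on the inner product
  have hstep : G ^ 2 / (2 * C) ≤ f xk - f xstar := by
    have hfy := hmin y
    have hG2C : G ^ 2 / (2 * C) = η * G ^ 2 / 2 := by
      rw [hηdef]
      field_simp
      try ring
    have h11 : L0 + 2 * L1 * G ≤ C := by
      rw [hCdef]; nlinarith [mul_pos hL1 hGpos]
    have h10 : (L0 + 2 * L1 * G) / 2 * (η * G) ^ 2 ≤ η * G ^ 2 / 2 := by
      calc (L0 + 2 * L1 * G) / 2 * (η * G) ^ 2 ≤ C / 2 * (η * G) ^ 2 := by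
            nlinarith [sq_nonneg (η * G)]
        _ = (η * C) * (η * G ^ 2) / 2 := by ring
        _ = η * G ^ 2 / 2 := by rw [hηC]; ring
    rw [hG2C]
    linarith
  have hconvx := convex_grad_ineq f hconv hf xk xstar
  have hinner_g : G / (8 * L1) ≤ ⟪g, xk - xstar⟫ := by
    have h1 : G / (8 * L1) ≤ G ^ 2 / (2 * C) := by
      rw [div_le_div_iff₀ (by positivity) (by positivity)]
      nlinarith
    linarith
  -- clip of the true gradient
  have hclip_eq : clip g (lam / 2) = (lam / 2 / G) • g := by
    rw [clip, ← hGdef, min_eq_right (le_of_lt ((div_lt_one hGpos).2 hgrad))]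
  have hclip_inner : lam / (16 * L1) ≤ ⟪clip g (lam / 2), xk - xstar⟫ := by
    rw [hclip_eq, real_inner_smul_left]
    have hcoef : 0 ≤ lam / 2 / G := by positivity
    have h2 : lam / 2 / G * (G / (8 * L1)) ≤ lam / 2 / G * ⟪g, xk - xstar⟫ :=
      mul_le_mul_of_nonneg_left hinner_g hcoef
    have h3 : lam / 2 / G * (G / (8 * L1)) = lam / (16 * L1) := by
      field_simp
      ring
    linarith
  -- norm of the clipped stochastic gradient
  set gt := clip (g + ξk) lam with hgtdef
  have hgtnorm : ‖gt‖ ≤ lam := by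
    rw [hgtdef, clip, norm_smul, Real.norm_eq_abs,
      abs_of_nonneg (le_min zero_le_one (by positivity))]
    by_cases h : ‖g + ξk‖ = 0
    · rw [h]; simpa using hlam.le
    · calc min 1 (lam / ‖g + ξk‖) * ‖g + ξk‖ ≤ lam / ‖g + ξk‖ * ‖g + ξk‖ :=
          mul_le_mul_of_nonneg_right (min_le_right _ _) (norm_nonneg _)
        _ = lam := div_mul_cancel₀ lam h
  -- final algebra
  have hexp : ‖(xk - γ • gt) - xstar‖ ^ 2
      = ‖xk - xstar‖ ^ 2 - 2 * γ * ⟪gt, xk - xstar⟫ + γ ^ 2 * ‖gt‖ ^ 2 := by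
    have h9 : (xk - γ • gt) - xstar = (xk - xstar) - γ • gt := by abel
    rw [h9, norm_sub_sq_real, real_inner_smul_right, norm_smul, Real.norm_eq_abs]
    rw [real_inner_comm]
    rw [mul_pow, sq_abs]
    ring
  rw [hexp, inner_sub_left]
  have hγle16 : γ * (16 * L1 * lam) ≤ 1 := by
    rw [← le_div_iff₀ (by positivity)]
    exact hγle
  have hq0 : ‖gt‖ ^ 2 ≤ lam ^ 2 := by nlinarith [norm_nonneg gt]
  have hq1 : γ ^ 2 * ‖gt‖ ^ 2 ≤ γ ^ 2 * lam ^ 2 :=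
    mul_le_mul_of_nonneg_left hq0 (sq_nonneg γ)
  have hγlam : γ * lam ≤ 1 / (16 * L1) := by
    rw [le_div_iff₀ (by positivity : (0:ℝ) < 16 * L1)]
    calc γ * lam * (16 * L1) = γ * (16 * L1 * lam) := by ring
      _ ≤ 1 := hγle16
  have hq2 : γ ^ 2 * lam ^ 2 ≤ γ * lam / (16 * L1) := by
    have h0 : 0 ≤ γ * lam := by positivity
    calc γ ^ 2 * lam ^ 2 = (γ * lam) * (γ * lam) := by ring
      _ ≤ (γ * lam) * (1 / (16 * L1)) := mul_le_mul_of_nonneg_left hγlam h0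
      _ = γ * lam / (16 * L1) := by ring
  have hq3 : γ * lam / (16 * L1) ≤ γ * ⟪clip g (lam / 2), xk - xstar⟫ := by
    rw [mul_div_assoc]
    exact mul_le_mul_of_nonneg_left hclip_inner hγ.le
  linarith [hq1, hq2, hq3]
end

section
/- Let f be convex, differentiable, with minimizer x*, and let x ∈ R^d with ‖∇f(x)‖ > λ/2, and ξ ∈ R^d with ‖ξ‖ ≤ B ≤ λ/2. Define θ̂ = clip(∇f(x)+ξ, λ) − clip(∇f(x), λ/2). Then for any γ > 0, −2γ⟨θ̂, x − x*⟩ ≤ 2γ‖ξ‖·‖x − x*‖ ≤ 2γ B ‖x − x*‖. -/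
open MeasureTheory Real
open scoped RealInnerProductSpace

lemma grad_inner_nonneg {d : ℕ} (f : EuclideanSpace ℝ (Fin d) → ℝ)
    (hconv : ConvexOn ℝ Set.univ f) (hf : Differentiable ℝ f)
    (xstar x : EuclideanSpace ℝ (Fin d)) (hmin : ∀ y, f xstar ≤ f y) :
    0 ≤ ⟪gradient f x, x - xstar⟫ := by
  set c : ℝ → EuclideanSpace ℝ (Fin d) := fun t => xstar + t • (x - xstar) with hc
  have hc1 : c 1 = x := by simp [hc]
  have hcder : ∀ t : ℝ, HasDerivAt c (x - xstar) t := by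
    intro t
    simpa [hc] using ((hasDerivAt_id t).smul_const (x - xstar)).const_add xstar
  have hcomp : HasDerivAt (f ∘ c) ⟪gradient f x, x - xstar⟫ 1 := by
    have hgr := (hf x).hasGradientAt
    have hfd : HasFDerivAt f (InnerProductSpace.toDual ℝ _ (gradient f x)) x :=
      hgr.hasFDerivAt
    have := (hc1 ▸ hfd : HasFDerivAt f (InnerProductSpace.toDual ℝ _ (gradient f x)) (c 1)).comp_hasDerivAt 1 (hcder 1)
    simpa using this
  have hconvc : ConvexOn ℝ Set.univ (f ∘ c) := by
    have : c = fun t : ℝ => AffineMap.lineMap xstar x t := by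
      funext t; simp [hc, AffineMap.lineMap_apply_module]; module
    rw [this]
    have h := hconv.comp_affineMap (AffineMap.lineMap xstar x)
    simpa using h
  have hslope : slope (f ∘ c) 0 1 ≤ ⟪gradient f x, x - xstar⟫ :=
    hconvc.slope_le_of_hasDerivAt (Set.mem_univ 0) (Set.mem_univ 1) one_pos hcomp
  have : 0 ≤ slope (f ∘ c) 0 1 := by
    rw [slope_def_field]
    have h0 : c 0 = xstar := by simp [hc]
    simp only [Function.comp_apply, hc1, h0]
    have := hmin x
    linarith
  linarith

theorem hat_theta_inner_bound {d : ℕ} (f : EuclideanSpace ℝ (Fin d) → ℝ)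
    (hconv : ConvexOn ℝ Set.univ f) (hf : Differentiable ℝ f)
    (xstar : EuclideanSpace ℝ (Fin d)) (hmin : ∀ y, f xstar ≤ f y)
    (x : EuclideanSpace ℝ (Fin d)) (lam B γ : ℝ)
    (hlam : 0 < lam) (hB : 0 < B) (hγ : 0 < γ) (hBle : B ≤ lam / 2)
    (hg : lam / 2 < ‖gradient f x‖)
    (ξ : EuclideanSpace ℝ (Fin d)) (hξ : ‖ξ‖ ≤ B) :
    -2 * γ * ⟪clip (gradient f x + ξ) lam - clip (gradient f x) (lam / 2), x - xstar⟫
        ≤ 2 * γ * ‖ξ‖ * ‖x - xstar‖ ∧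
      2 * γ * ‖ξ‖ * ‖x - xstar‖ ≤ 2 * γ * B * ‖x - xstar‖ := by
  set g := gradient f x with hgdef
  set y := x - xstar with hy
  have hgnorm : (0:ℝ) < ‖g‖ := lt_trans (by linarith) hg
  have hξB : ‖ξ‖ ≤ lam / 2 := le_trans hξ hBle
  -- scalars
  set c₁ : ℝ := min 1 (lam / ‖g + ξ‖) with hc₁
  set c₂ : ℝ := (lam / 2) / ‖g‖ with hc₂
  have hclip2 : clip g (lam / 2) = c₂ • g := by
    rw [clip]
    congr 1
    rw [hc₂, min_eq_right]
    rw [div_le_one hgnorm]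
    linarith
  have hc₂0 : 0 ≤ c₂ := by positivity
  have hc₂1 : c₂ ≤ 1 := by
    rw [hc₂, div_le_one hgnorm]; linarith
  have hc₁0 : 0 ≤ c₁ := le_min zero_le_one (by positivity)
  have hc₁1 : c₁ ≤ 1 := min_le_left _ _
  have hsumnorm : ‖g + ξ‖ ≤ 2 * ‖g‖ := by
    calc ‖g + ξ‖ ≤ ‖g‖ + ‖ξ‖ := norm_add_le _ _
    _ ≤ 2 * ‖g‖ := by linarith
  have hsumpos : (0:ℝ) < ‖g + ξ‖ := by
    have h := norm_sub_norm_le g (g + ξ)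
    have h2 : ‖g - (g + ξ)‖ = ‖ξ‖ := by
      simp
    rw [h2] at h
    linarith
  have hc₂c₁ : c₂ ≤ c₁ := by
    refine le_min hc₂1 ?_
    rw [hc₂, div_div]
    exact div_le_div_of_nonneg_left hlam.le (by positivity) hsumnorm
  have hinner : ⟪clip (g + ξ) lam - clip g (lam / 2), y⟫
      = (c₁ - c₂) * ⟪g, y⟫ + c₁ * ⟪ξ, y⟫ := by
    rw [hclip2, clip]
    rw [inner_sub_left, real_inner_smul_left, real_inner_smul_left, inner_add_left]
    ring
  have hgy : 0 ≤ ⟪g, y⟫ := grad_inner_nonneg f hconv hf xstar x hmin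
  have hξy : -⟪ξ, y⟫ ≤ ‖ξ‖ * ‖y‖ := by
    have := abs_real_inner_le_norm ξ y
    cases abs_le.mp this with
    | intro h1 h2 => linarith
  have hmain : -⟪clip (g + ξ) lam - clip g (lam / 2), y⟫ ≤ ‖ξ‖ * ‖y‖ := by
    rw [hinner]
    have h1 : 0 ≤ (c₁ - c₂) * ⟪g, y⟫ := mul_nonneg (by linarith) hgy
    have h2 : -(c₁ * ⟪ξ, y⟫) ≤ c₁ * (‖ξ‖ * ‖y‖) := by
      rw [← mul_neg]
      exact mul_le_mul_of_nonneg_left hξy hc₁0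
    have h3 : c₁ * (‖ξ‖ * ‖y‖) ≤ 1 * (‖ξ‖ * ‖y‖) :=
      mul_le_mul_of_nonneg_right hc₁1 (by positivity)
    nlinarith
  constructor
  · have := mul_le_mul_of_nonneg_left hmain (by positivity : (0:ℝ) ≤ 2 * γ)
    calc -2 * γ * ⟪clip (g + ξ) lam - clip g (lam / 2), y⟫
        = 2 * γ * (-⟪clip (g + ξ) lam - clip g (lam / 2), y⟫) := by ring
      _ ≤ 2 * γ * (‖ξ‖ * ‖y‖) := this
      _ = 2 * γ * ‖ξ‖ * ‖y‖ := by ring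
  · have : ‖ξ‖ * ‖y‖ ≤ B * ‖y‖ := mul_le_mul_of_nonneg_right hξ (norm_nonneg _)
    nlinarith
end
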